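/- arXiv:1011.5468 — 5 statements merged into one kernel-verified Lean document; each statement's English description precedes it below -/
import Mathlib

section
/- (Technical Lemma 1.) Let L = 0 or L = +∞. Assume the standing assumptions, and suppose there exist ν, γ ∈ ℝ with 1+γ−ν > 0 such that τ(x)/β(x) = O(x^{ν−γ}) as x → L; set k = 1/(1+γ−ν). Then for every r > 0 there exists A_r > 0 such that, for all α near L, for a.e. x ≥ A_r one has (α^k x)·β(α^k x) ≥ r·α·τ(α^k x); equivalently, with τ_α(x) = α^{−kν}τ(α^k x) and β_α(x) = α^{−kγ}β(α^k x), one has x β_α(x)/τ_α(x) ≥ r for a.e. x ≥ A_r and all α near L. -/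
open MeasureTheory Filter Set Topology

noncomputable section

/-- A pair `(lam, U)` is a solution of the eigenproblem for `(τ, β, κ)`:
`lam > 0`; `U > 0` on `(0,∞)`; the eigen-equation
`(τU)′(x) + (β(x)+lam)U(x) = 2∫_x^∞ β(y)κ(x,y)U(y) dy` holds for all `x > 0`;
`∫_0^∞ U = 1`; for every `r ≥ 0` the functions `x^r U`, `x^r β U`, `x^r τ U` are
integrable on `(0,∞)`; and `x^r τ(x)U(x) → 0` as `x → 0⁺` and as `x → +∞`. -/
structure EigenSolution (τ β : ℝ → ℝ) (κ : ℝ → ℝ → ℝ) (lam : ℝ) (U : ℝ → ℝ) : Prop where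
  lam_pos : 0 < lam
  U_pos : ∀ x : ℝ, 0 < x → 0 < U x
  eqn : ∀ x : ℝ, 0 < x → HasDerivAt (fun y => τ y * U y)
      (2 * (∫ y in Ioi x, β y * κ x y * U y) - (β x + lam) * U x) x
  normalized : (∫ x in Ioi (0:ℝ), U x) = 1
  int_U : ∀ r : ℝ, 0 ≤ r → IntegrableOn (fun x => x ^ r * U x) (Ioi 0) volume
  int_betaU : ∀ r : ℝ, 0 ≤ r → IntegrableOn (fun x => x ^ r * (β x * U x)) (Ioi 0) volume
  int_tauU : ∀ r : ℝ, 0 ≤ r → IntegrableOn (fun x => x ^ r * (τ x * U x)) (Ioi 0) volume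
  lim_zero : ∀ r : ℝ, 0 ≤ r →
      Tendsto (fun x => x ^ r * (τ x * U x)) (nhdsWithin 0 (Ioi 0)) (nhds 0)
  lim_top : ∀ r : ℝ, 0 ≤ r → Tendsto (fun x => x ^ r * (τ x * U x)) atTop (nhds 0)

/-- Assumptions on a fragmentation kernel `κ`: measurability, nonnegativity, support in
`{x ≤ y}`, total mass `1`, first moment `y/2`, second moment uniformly `≤ c < 1/2`, and the
tail estimate `∫_0^x κ(z,y) dz ≤ min(1, C₀ (x/y)^{γ₀})`. -/
structure KernelAssumptions (κ : ℝ → ℝ → ℝ) : Prop where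
  meas : Measurable (Function.uncurry κ)
  nonneg : ∀ x y : ℝ, 0 ≤ κ x y
  supp : ∀ x y : ℝ, y < x → κ x y = 0
  mass : ∀ y : ℝ, 0 < y → (∫ x in Ioc (0:ℝ) y, κ x y) = 1
  mean : ∀ y : ℝ, 0 < y → (∫ x in Ioc (0:ℝ) y, x * κ x y) = y / 2
  second : ∃ c : ℝ, c < 1/2 ∧ ∀ y : ℝ, 0 < y → (∫ x in Ioc (0:ℝ) y, (x / y) ^ 2 * κ x y) ≤ c
  tail : ∃ C₀ : ℝ, 0 < C₀ ∧ ∃ γ₀ : ℝ, 0 ≤ γ₀ ∧ ∀ x y : ℝ, 0 < x → x ≤ y →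
      (∫ z in Ioc (0:ℝ) x, κ z y) ≤ min 1 (C₀ * (x / y) ^ γ₀)

/-- The standing assumptions on the coefficients `(τ, β, κ)` of the growth-fragmentation
eigenproblem. -/
structure StandingAssumptions (τ β : ℝ → ℝ) (κ : ℝ → ℝ → ℝ) : Prop where
  τ_meas : Measurable τ
  β_meas : Measurable β
  τ_nonneg : ∀ x : ℝ, 0 < x → 0 ≤ τ x
  β_nonneg : ∀ x : ℝ, 0 < x → 0 ≤ β x
  kernel : KernelAssumptions κ
  /-- The tail constant `γ₀` of the kernel can be chosen so that `x^{γ₀}/τ(x)` is integrable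
  near `0`. -/
  kernel_tau : ∃ C₀ : ℝ, 0 < C₀ ∧ ∃ γ₀ : ℝ, 0 ≤ γ₀ ∧
      (∀ x y : ℝ, 0 < x → x ≤ y → (∫ z in Ioc (0:ℝ) x, κ z y) ≤ min 1 (C₀ * (x / y) ^ γ₀)) ∧
      ∃ a : ℝ, 0 < a ∧ IntegrableOn (fun x => x ^ γ₀ / τ x) (Ioc 0 a) volume
  β_locInt : LocallyIntegrableOn β (Ioi 0) volume
  /-- `limsup_{x→∞} x^{-μ} β(x) < ∞` and `liminf_{x→∞} x^{μ} β(x) > 0` for some `μ ≥ 0`. -/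
  β_poly : ∃ μ : ℝ, 0 ≤ μ ∧ (∃ C : ℝ, ∀ᶠ x in atTop, β x ≤ C * x ^ μ) ∧
      (∃ ε : ℝ, 0 < ε ∧ ∀ᶠ x in atTop, ε * x ^ (-μ) ≤ β x)
  /-- `x^{r₀} τ(x)` is locally essentially bounded on `[0,∞)` for some `r₀ ≥ 0`. -/
  τ_locBdd : ∃ r₀ : ℝ, 0 ≤ r₀ ∧ ∀ A : ℝ, 0 < A → ∃ C : ℝ,
      ∀ᵐ x ∂(volume.restrict (Ioc (0:ℝ) A)), x ^ r₀ * τ x ≤ C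
  /-- `limsup_{x→∞} x^{-μ'} τ(x) < ∞` and `liminf_{x→∞} x^{μ'} τ(x) > 0` for some `μ' ≥ 0`. -/
  τ_poly : ∃ μ' : ℝ, 0 ≤ μ' ∧ (∃ C : ℝ, ∀ᶠ x in atTop, τ x ≤ C * x ^ μ') ∧
      (∃ ε : ℝ, 0 < ε ∧ ∀ᶠ x in atTop, ε * x ^ (-μ') ≤ τ x)
  /-- On every compact subset of `(0,∞)`, `τ` and `β` are a.e. bounded below by a positive
  constant. -/
  pos_on_compacts : ∀ K : Set ℝ, IsCompact K → K ⊆ Ioi 0 →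
      ∃ m : ℝ, 0 < m ∧ ∀ᵐ x ∂(volume.restrict K), m ≤ τ x ∧ m ≤ β x
  /-- `β/τ` is integrable near `0`. -/
  βτ_int0 : ∃ a : ℝ, 0 < a ∧ IntegrableOn (fun x => β x / τ x) (Ioc 0 a) volume
  /-- `x β(x)/τ(x) → +∞` as `x → +∞`. -/
  frag_dominates : Tendsto (fun x => x * β x / τ x) atTop atTop

/-- The rescaled growth rate `τ_α(x) = α^{-kν} τ(α^k x)`. -/
def tauScaled (τ : ℝ → ℝ) (k ν : ℝ) (α : ℝ) : ℝ → ℝ :=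
  fun x => α ^ (-(k * ν)) * τ (α ^ k * x)

/-- The rescaled fragmentation rate `β_α(x) = α^{-kγ} β(α^k x)`. -/
def betaScaled (β : ℝ → ℝ) (k γ : ℝ) (α : ℝ) : ℝ → ℝ :=
  fun x => α ^ (-(k * γ)) * β (α ^ k * x)

/-- The rescaled fragmentation kernel `κ_α(x,y) = α^k κ(α^k x, α^k y)`. -/
def kappaScaled (κ : ℝ → ℝ → ℝ) (k : ℝ) (α : ℝ) : ℝ → ℝ → ℝ :=
  fun x y => α ^ k * κ (α ^ k * x) (α ^ k * y)

/-- Power-law behaviour of `τ` and `β` along the filter `ℓ` (either `x → 0⁺` or `x → +∞`):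
`τ(x) ~ τb x^ν` and `β(x) ~ βb x^γ`, with `1 + γ - ν > 0` and `τb, βb > 0`. -/
structure PowerLaw (τ β : ℝ → ℝ) (ℓ : Filter ℝ) (ν γ τb βb : ℝ) : Prop where
  one_add_pos : 0 < 1 + γ - ν
  τb_pos : 0 < τb
  βb_pos : 0 < βb
  τ_equiv : Tendsto (fun x => τ x / (τb * x ^ ν)) ℓ (nhds 1)
  β_equiv : Tendsto (fun x => β x / (βb * x ^ γ)) ℓ (nhds 1)

/-- Kernel-limit assumption: for a.e. `y > 0`, the rescaled kernels `κ_α(·,y)` converge in the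
sense of distributions to `κL(·,y)` as `α` tends along `ℓα`. -/
def KernelLimit (κ κL : ℝ → ℝ → ℝ) (k : ℝ) (ℓα : Filter ℝ) : Prop :=
  ∀ᵐ y ∂(volume.restrict (Ioi (0:ℝ))),
    ∀ φ : ℝ → ℝ, ContDiff ℝ (⊤ : ℕ∞) φ → HasCompactSupport φ →
      Tendsto (fun α => ∫ x in Ioi (0:ℝ), φ x * kappaScaled κ k α x y) ℓα
        (nhds (∫ x in Ioi (0:ℝ), φ x * κL x y))

end

private lemma tl_qmp (c : ℝ) (hc : c ≠ 0) :
    Measure.QuasiMeasurePreserving (fun x : ℝ => c * x) volume volume :=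
  ⟨measurable_const_mul c, by
    rw [show (fun x : ℝ => c * x) = (c * ·) from rfl, Real.map_volume_mul_left hc]
    exact Measure.smul_absolutelyContinuous⟩

private lemma tl_key (τ β : ℝ → ℝ) {ν γ : ℝ} (hνγ : 0 < 1 + γ - ν) {C' : ℝ} (hC' : 0 < C')
    {α x r : ℝ} (hα : 0 < α) (hx : 0 < x) (hr : 0 < r)
    (hA : r * C' ≤ x ^ (1 + γ - ν))
    (hτ0 : 0 ≤ τ (α ^ (1 / (1 + γ - ν)) * x)) (hβ0 : 0 ≤ β (α ^ (1 / (1 + γ - ν)) * x))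
    (hτβ : τ (α ^ (1 / (1 + γ - ν)) * x) ≤
      C' * ((α ^ (1 / (1 + γ - ν)) * x) ^ (ν - γ) * β (α ^ (1 / (1 + γ - ν)) * x))) :
    r * (α * τ (α ^ (1 / (1 + γ - ν)) * x)) ≤
      (α ^ (1 / (1 + γ - ν)) * x) * β (α ^ (1 / (1 + γ - ν)) * x) := by
  set k := 1 / (1 + γ - ν) with hk
  set y := α ^ k * x with hydef
  have hy : 0 < y := by positivity
  set t := τ y
  set b := β y
  have h1 : t / C' ≤ y ^ (ν - γ) * b := by
    rw [div_le_iff₀ hC']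
    linarith [hτβ, (mul_comm C' (y ^ (ν - γ) * b))]
  have hy1 : y ^ (1 + γ - ν) = α * x ^ (1 + γ - ν) := by
    rw [hydef, Real.mul_rpow (Real.rpow_nonneg hα.le k) hx.le, ← Real.rpow_mul hα.le,
      hk, one_div_mul_cancel hνγ.ne', Real.rpow_one]
  calc r * (α * t) = (α * (r * C')) * (t / C') := by field_simp
    _ ≤ (α * x ^ (1 + γ - ν)) * (t / C') := by
        apply mul_le_mul_of_nonneg_right _ (div_nonneg hτ0 hC'.le)
        exact mul_le_mul_of_nonneg_left hA hα.le
    _ = y ^ (1 + γ - ν) * (t / C') := by rw [hy1]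
    _ ≤ y ^ (1 + γ - ν) * (y ^ (ν - γ) * b) :=
        mul_le_mul_of_nonneg_left h1 (Real.rpow_nonneg hy.le _)
    _ = (y ^ (1 + γ - ν) * y ^ (ν - γ)) * b := by ring
    _ = y * b := by
        rw [← Real.rpow_add hy]
        norm_num

theorem tl_main
    (τ β : ℝ → ℝ)
    (ℓ : Filter ℝ) (hℓ : ℓ = nhdsWithin 0 (Ioi 0) ∨ ℓ = atTop)
    (hτn : ∀ x : ℝ, 0 < x → 0 ≤ τ x) (hβn : ∀ x : ℝ, 0 < x → 0 ≤ β x)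
    (hτ_locBdd : ∃ r₀ : ℝ, 0 ≤ r₀ ∧ ∀ A : ℝ, 0 < A → ∃ C : ℝ,
      ∀ᵐ x ∂(volume.restrict (Ioc (0:ℝ) A)), x ^ r₀ * τ x ≤ C)
    (hpoc : ∀ K : Set ℝ, IsCompact K → K ⊆ Ioi 0 →
      ∃ m : ℝ, 0 < m ∧ ∀ᵐ x ∂(volume.restrict K), m ≤ τ x ∧ m ≤ β x)
    (hfd : Tendsto (fun x => x * β x / τ x) atTop atTop)
    (ν γ : ℝ) (hνγ : 0 < 1 + γ - ν)
    (hO : ∃ C : ℝ, ∀ᶠ x in ℓ, τ x ≤ C * (x ^ (ν - γ) * β x)) :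
    ∀ r : ℝ, 0 < r → ∃ A : ℝ, 0 < A ∧ ∀ᶠ α in ℓ,
      ∀ᵐ x ∂(volume.restrict (Ici A)),
        r * (α * τ (α ^ (1 / (1 + γ - ν)) * x)) ≤
          (α ^ (1 / (1 + γ - ν)) * x) * β (α ^ (1 / (1 + γ - ν)) * x) := by
  intro r hr
  obtain ⟨C, hC⟩ := hO
  set C' := max C 1 with hC'def
  have hC' : (0:ℝ) < C' := lt_of_lt_of_le one_pos (le_max_right _ _)
  have hpos : ∀ᶠ x in ℓ, 0 < x := by
    rcases hℓ with h | h <;> subst h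
    · exact eventually_mem_nhdsWithin
    · exact eventually_gt_atTop 0
  have hO' : ∀ᶠ x in ℓ, 0 < x ∧ τ x ≤ C' * (x ^ (ν - γ) * β x) := by
    filter_upwards [hpos, hC] with x hx h
    exact ⟨hx, h.trans (mul_le_mul_of_nonneg_right (le_max_left _ _)
      (mul_nonneg (Real.rpow_nonneg hx.le _) (hβn x hx)))⟩
  set k := 1 / (1 + γ - ν) with hkdef
  have hk : 0 < k := by positivity
  set A := max ((r * C') ^ k) 1 with hAdef
  have hA1 : (1:ℝ) ≤ A := le_max_right _ _
  have hA : (0:ℝ) < A := lt_of_lt_of_le one_pos hA1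
  have hApow : ∀ x : ℝ, A ≤ x → r * C' ≤ x ^ (1 + γ - ν) := by
    intro x hx
    have h0 : r * C' = ((r * C') ^ k) ^ (1 + γ - ν) := by
      rw [← Real.rpow_mul (by positivity), hkdef, one_div_mul_cancel hνγ.ne', Real.rpow_one]
    rw [h0]
    exact Real.rpow_le_rpow (Real.rpow_nonneg (by positivity) _)
      ((le_max_left _ _).trans hx) hνγ.le
  refine ⟨A, hA, ?_⟩
  rcases hℓ with h | h <;> subst h
  · -- ℓ = 𝓝[>] 0
    obtain ⟨δ, hδ0, hδ⟩ : ∃ δ > 0, ∀ y ∈ Ioo (0:ℝ) δ, τ y ≤ C' * (y ^ (ν - γ) * β y) := by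
      rw [eventually_nhdsWithin_iff, Metric.eventually_nhds_iff] at hO'
      obtain ⟨ε, hε, hball⟩ := hO'
      exact ⟨ε, hε, fun y hy => (hball (by
        simp [Real.dist_eq, abs_of_pos hy.1, hy.2]) hy.1).2⟩
    obtain ⟨M₀, hM₀⟩ := eventually_atTop.mp (hfd.eventually_ge_atTop 1)
    set M := max M₀ (max δ 1) with hMdef
    have hM1 : (1:ℝ) ≤ M := (le_max_right δ 1).trans (le_max_right _ _)
    have hMδ : δ ≤ M := (le_max_left δ 1).trans (le_max_right _ _)
    have hMfrag : ∀ y : ℝ, M ≤ y → τ y ≤ y * β y := by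
      intro y hy
      have hy0 : 0 < y := lt_of_lt_of_le (lt_of_lt_of_le one_pos hM1) hy
      have h1 := hM₀ y ((le_max_left _ _).trans hy)
      rcases eq_or_lt_of_le (hτn y hy0) with h | h
      · rw [← h]; exact mul_nonneg hy0.le (hβn y hy0)
      · exact ((one_le_div h).mp h1)
    obtain ⟨m, hm0, hm⟩ := hpoc (Icc δ M) isCompact_Icc
      (fun y hy => lt_of_lt_of_le hδ0 hy.1)
    obtain ⟨r₀, hr₀, hloc⟩ := hτ_locBdd
    obtain ⟨C₁, hC₁⟩ := hloc M (lt_of_lt_of_le one_pos hM1)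
    set Cτ := max (C₁ / δ ^ r₀) 1 with hCτdef
    have hCτ0 : (0:ℝ) < Cτ := lt_of_lt_of_le one_pos (le_max_right _ _)
    have haeQ : ∀ᵐ y : ℝ, y ∈ Icc δ M → (τ y ≤ Cτ ∧ m ≤ β y) := by
      filter_upwards [ae_imp_of_ae_restrict hC₁, ae_imp_of_ae_restrict hm] with y h1 h2 hy
      have hy0 : 0 < y := lt_of_lt_of_le hδ0 hy.1
      have ht := h1 ⟨hy0, hy.2⟩
      have hδr : δ ^ r₀ ≤ y ^ r₀ := Real.rpow_le_rpow hδ0.le hy.1 hr₀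
      have hδr0 : 0 < δ ^ r₀ := Real.rpow_pos_of_pos hδ0 _
      refine ⟨le_trans ?_ (le_max_left _ _), (h2 hy).2⟩
      rw [le_div_iff₀ hδr0]
      calc τ y * δ ^ r₀ ≤ τ y * y ^ r₀ :=
            mul_le_mul_of_nonneg_left hδr (hτn y hy0)
        _ = y ^ r₀ * τ y := mul_comm _ _
        _ ≤ C₁ := ht
    set ε := min (1 / r) (δ * m / (r * Cτ)) with hεdef
    have hε0 : 0 < ε := lt_min (by positivity) (by positivity)
    filter_upwards [Ioo_mem_nhdsGT_of_mem (⟨le_refl (0:ℝ), hε0⟩ : (0:ℝ) ∈ Ico 0 ε)]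
      with α hα
    have hα0 : 0 < α := hα.1
    have hαk0 : 0 < α ^ k := Real.rpow_pos_of_pos hα0 k
    have haeQ' : ∀ᵐ x : ℝ,
        (α ^ k * x) ∈ Icc δ M → (τ (α ^ k * x) ≤ Cτ ∧ m ≤ β (α ^ k * x)) :=
      (tl_qmp (α ^ k) hαk0.ne').ae haeQ
    filter_upwards [ae_restrict_of_ae haeQ', ae_restrict_mem measurableSet_Ici] with x hQ hx
    have hx0 : 0 < x := lt_of_lt_of_le hA hx
    have hy0 : 0 < α ^ k * x := by positivity
    by_cases hyδ : α ^ k * x < δ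
    · exact tl_key τ β hνγ hC' hα0 hx0 hr (hApow x hx)
        (hτn _ hy0) (hβn _ hy0) (hδ _ ⟨hy0, hyδ⟩)
    by_cases hyM : α ^ k * x ≤ M
    · obtain ⟨ht, hb⟩ := hQ ⟨not_lt.mp hyδ, hyM⟩
      have h1 : r * (α * τ (α ^ k * x)) ≤ r * (α * Cτ) :=
        mul_le_mul_of_nonneg_left
          (mul_le_mul_of_nonneg_left ht hα0.le) hr.le
      have hαlt : α < δ * m / (r * Cτ) := lt_of_lt_of_le hα.2 (min_le_right _ _)
      rw [lt_div_iff₀ (by positivity)] at hαlt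
      have h2 : r * (α * Cτ) ≤ δ * m := by nlinarith
      have h3 : δ * m ≤ (α ^ k * x) * β (α ^ k * x) :=
        mul_le_mul (not_lt.mp hyδ) hb hm0.le hy0.le
      linarith
    · have hrα : α * r ≤ 1 :=
        le_of_lt ((lt_div_iff₀ hr).mp (lt_of_lt_of_le hα.2 (min_le_left _ _)))
      have hτy := hMfrag _ (le_of_lt (not_le.mp hyM))
      calc r * (α * τ (α ^ k * x)) = (α * r) * τ (α ^ k * x) := by ring
        _ ≤ 1 * τ (α ^ k * x) := mul_le_mul_of_nonneg_right hrα (hτn _ hy0)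
        _ = τ (α ^ k * x) := one_mul _
        _ ≤ (α ^ k * x) * β (α ^ k * x) := hτy
  · -- ℓ = atTop
    obtain ⟨M, hM⟩ := eventually_atTop.mp hO'
    have htend : Tendsto (fun α : ℝ => α ^ k * A) atTop atTop :=
      (tendsto_rpow_atTop hk).atTop_mul_const hA
    filter_upwards [htend.eventually_ge_atTop M, eventually_gt_atTop 0] with α hαM hα0
    filter_upwards [ae_restrict_mem measurableSet_Ici] with x hx
    have hx0 : 0 < x := lt_of_lt_of_le hA hx
    have hy0 : 0 < α ^ k * x := by positivity
    have hyM : M ≤ α ^ k * x :=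
      hαM.trans (mul_le_mul_of_nonneg_left hx (Real.rpow_nonneg hα0.le k))
    exact tl_key τ β hνγ hC' hα0 hx0 hr (hApow x hx)
      (hτn _ hy0) (hβn _ hy0) (hM _ hyM).2

/-- Technical Lemma 1: if `τ/β = O(x^{ν-γ})` as `x → L` with `1+γ-ν > 0` and `k = 1/(1+γ-ν)`,
then for every `r > 0` there is `A_r > 0` such that for all `α` near `L`, for a.e. `x ≥ A_r`,
`(α^k x) β(α^k x) ≥ r α τ(α^k x)`. -/
theorem tech_lemma_one
    (τ β : ℝ → ℝ) (κ : ℝ → ℝ → ℝ)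
    (ℓ : Filter ℝ) (hℓ : ℓ = nhdsWithin 0 (Ioi 0) ∨ ℓ = atTop)
    (hsa : StandingAssumptions τ β κ)
    (ν γ : ℝ) (hνγ : 0 < 1 + γ - ν)
    (hO : ∃ C : ℝ, ∀ᶠ x in ℓ, τ x ≤ C * (x ^ (ν - γ) * β x)) :
    ∀ r : ℝ, 0 < r → ∃ A : ℝ, 0 < A ∧ ∀ᶠ α in ℓ,
      ∀ᵐ x ∂(volume.restrict (Ici A)),
        r * (α * τ (α ^ (1 / (1 + γ - ν)) * x)) ≤
          (α ^ (1 / (1 + γ - ν)) * x) * β (α ^ (1 / (1 + γ - ν)) * x) :=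
  tl_main τ β ℓ hℓ hsa.τ_nonneg hsa.β_nonneg hsa.τ_locBdd hsa.pos_on_compacts
    hsa.frag_dominates ν γ hνγ hO
end

section
/- (Technical Lemma 2, upper bound.) Let L = 0 or L = +∞ and let k > 0. Suppose τ : (0,∞) → [0,∞) is measurable, τ(x) = O(x^ν) as x → L for some ν ∈ ℝ, and there exists r₀ > 0 such that x ↦ x^{r₀}τ(x) is locally essentially bounded on [0,∞). Set τ_α(x) = α^{−kν}τ(α^k x). Then for every A > 0 and every r ≥ max(r₀, −ν) there exists C > 0 such that, for all α near L, for a.e. x ∈ (0, A], x^r τ_α(x) ≤ C. -/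
open MeasureTheory Filter Set Topology

lemma ae_comp_const_mul {c : ℝ} (hc : c ≠ 0) {P : ℝ → Prop} (h : ∀ᵐ y : ℝ, P y) :
    ∀ᵐ x : ℝ, P (c * x) := by
  have hq : Measure.QuasiMeasurePreserving (fun x : ℝ => c * x) volume volume :=
    ⟨measurable_const_mul c, by
      rw [Real.map_volume_mul_left hc]; exact Measure.smul_absolutelyContinuous⟩
  exact hq.ae h

/-- Technical Lemma 2, upper bound: if `τ(x) = O(x^ν)` as `x → L` and `x^{r₀} τ(x)` is locally
essentially bounded on `[0,∞)`, then for every `A > 0` and `r ≥ max(r₀, -ν)` there is `C > 0`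
with `x^r τ_α(x) ≤ C` for a.e. `x ∈ (0,A]` and all `α` near `L`. -/
theorem tech_lemma_two_upper
    (τ : ℝ → ℝ) (hτmeas : Measurable τ) (hτnn : ∀ x : ℝ, 0 < x → 0 ≤ τ x)
    (ℓ : Filter ℝ) (hℓ : ℓ = nhdsWithin 0 (Ioi 0) ∨ ℓ = atTop)
    (k : ℝ) (hk : 0 < k) (ν : ℝ)
    (hO : ∃ C : ℝ, ∀ᶠ x in ℓ, τ x ≤ C * x ^ ν)
    (r₀ : ℝ) (hr₀ : 0 < r₀)
    (hloc : ∀ A : ℝ, 0 < A → ∃ C : ℝ,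
        ∀ᵐ x ∂(volume.restrict (Ioc (0:ℝ) A)), x ^ r₀ * τ x ≤ C) :
    ∀ A : ℝ, 0 < A → ∀ r : ℝ, max r₀ (-ν) ≤ r →
      ∃ C : ℝ, 0 < C ∧ ∀ᶠ α in ℓ,
        ∀ᵐ x ∂(volume.restrict (Ioc (0:ℝ) A)), x ^ r * tauScaled τ k ν α x ≤ C := by
  intro A hA r hr
  have hr₀r : r₀ ≤ r := le_trans (le_max_left _ _) hr
  have hrν : 0 ≤ r + ν := by have := le_trans (le_max_right _ _) hr; linarith
  obtain ⟨C₁, hC₁⟩ := hO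
  set C₁' : ℝ := max C₁ 0 with hC₁'def
  have hC₁nn : 0 ≤ C₁' := le_max_right _ _
  set B : ℝ := C₁' * (max A 1) ^ (r + ν) with hBdef
  have key : ∀ α x : ℝ, 0 < α → 0 < x → x ≤ A → τ (α ^ k * x) ≤ C₁ * (α ^ k * x) ^ ν →
      x ^ r * tauScaled τ k ν α x ≤ B := by
    intro α x hα hx hxA hle
    have hαk : (0:ℝ) < α ^ k := Real.rpow_pos_of_pos hα k
    have hy : 0 < α ^ k * x := mul_pos hαk hx
    have hle' : τ (α ^ k * x) ≤ C₁' * (α ^ k * x) ^ ν :=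
      hle.trans (mul_le_mul_of_nonneg_right (le_max_left _ _) (Real.rpow_nonneg hy.le _))
    have h1 : (α ^ k * x) ^ ν = α ^ (k * ν) * x ^ ν := by
      rw [Real.mul_rpow hαk.le hx.le, ← Real.rpow_mul hα.le]
    have hne : α ^ (k * ν) ≠ 0 := (Real.rpow_pos_of_pos hα _).ne'
    calc x ^ r * tauScaled τ k ν α x
        = x ^ r * (α ^ (-(k * ν)) * τ (α ^ k * x)) := rfl
      _ ≤ x ^ r * (α ^ (-(k * ν)) * (C₁' * (α ^ k * x) ^ ν)) := by
          refine mul_le_mul_of_nonneg_left ?_ (Real.rpow_nonneg hx.le r)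
          exact mul_le_mul_of_nonneg_left hle' (Real.rpow_nonneg hα.le _)
      _ = C₁' * x ^ (r + ν) := by
          rw [h1, Real.rpow_add hx, Real.rpow_neg hα.le]
          field_simp
      _ ≤ B := by
          refine mul_le_mul_of_nonneg_left ?_ hC₁nn
          exact Real.rpow_le_rpow hx.le (le_trans hxA (le_max_left A 1)) hrν
  rcases hℓ with hℓ0 | hltop
  · subst hℓ0
    obtain ⟨ε, hε, hball⟩ := Metric.mem_nhdsWithin_iff.1 hC₁
    refine ⟨max 1 B, lt_of_lt_of_le one_pos (le_max_left _ _), ?_⟩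
    have h1 : Tendsto (fun α : ℝ => α ^ k) (nhds (0:ℝ)) (nhds 0) := by
      have h := (Real.continuousAt_rpow_const 0 k (Or.inr hk.le)).tendsto
      simpa [Real.zero_rpow hk.ne'] using h
    have htend : Tendsto (fun α : ℝ => α ^ k * A) (nhdsWithin 0 (Ioi 0)) (nhds 0) := by
      simpa using (h1.mono_left nhdsWithin_le_nhds).mul_const A
    filter_upwards [self_mem_nhdsWithin, htend.eventually (Iio_mem_nhds hε)] with α hα hαε
    refine (ae_restrict_iff' measurableSet_Ioc).2 (ae_of_all _ fun x hx => ?_)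
    have hα0 : (0:ℝ) < α := hα
    have hαk : (0:ℝ) < α ^ k := Real.rpow_pos_of_pos hα0 k
    have hy : 0 < α ^ k * x := mul_pos hαk hx.1
    have hyε : α ^ k * x < ε := lt_of_le_of_lt
      (mul_le_mul_of_nonneg_left hx.2 hαk.le) hαε
    have hmem : α ^ k * x ∈ Metric.ball (0:ℝ) ε ∩ Ioi 0 := by
      constructor
      · simp only [Metric.mem_ball, Real.dist_eq, sub_zero]
        rw [abs_of_pos hy]; exact hyε
      · exact hy
    exact (key α x hα0 hx.1 hx.2 (hball hmem)).trans (le_max_right 1 B)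
  · subst hltop
    obtain ⟨M₀, hM₀⟩ := eventually_atTop.1 hC₁
    set M : ℝ := max M₀ 1 with hMdef
    have hM : 0 < M := lt_of_lt_of_le one_pos (le_max_right _ _)
    obtain ⟨C₂, hC₂⟩ := hloc M hM
    set C₂' : ℝ := max C₂ 0 with hC₂'def
    have hC₂nn : 0 ≤ C₂' := le_max_right _ _
    set B₂ : ℝ := C₂' * M ^ (r - r₀) with hB₂def
    have hQ : ∀ᵐ y : ℝ, y ∈ Ioc 0 M → y ^ r₀ * τ y ≤ C₂ :=
      (ae_restrict_iff' measurableSet_Ioc).1 hC₂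
    refine ⟨max 1 (max B B₂), lt_of_lt_of_le one_pos (le_max_left _ _), ?_⟩
    filter_upwards [eventually_ge_atTop (1:ℝ)] with α hα1
    have hα : (0:ℝ) < α := lt_of_lt_of_le one_pos hα1
    have hαk : (0:ℝ) < α ^ k := Real.rpow_pos_of_pos hα k
    have hae : ∀ᵐ x : ℝ, (α ^ k * x ∈ Ioc 0 M → (α ^ k * x) ^ r₀ * τ (α ^ k * x) ≤ C₂) :=
      ae_comp_const_mul hαk.ne' hQ
    filter_upwards [ae_restrict_of_ae hae, ae_restrict_mem measurableSet_Ioc] with x hx hmem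
    obtain ⟨hx0, hxA⟩ := hmem
    have hy : 0 < α ^ k * x := mul_pos hαk hx0
    by_cases hyM : α ^ k * x ≤ M
    · have hQx : (α ^ k * x) ^ r₀ * τ (α ^ k * x) ≤ C₂' := (hx ⟨hy, hyM⟩).trans (le_max_left _ _)
      have hτy : τ (α ^ k * x) ≤ C₂' * (α ^ k * x) ^ (-r₀) := by
        have h1 : (α ^ k * x) ^ (-r₀) * ((α ^ k * x) ^ r₀ * τ (α ^ k * x))
            ≤ (α ^ k * x) ^ (-r₀) * C₂' :=
          mul_le_mul_of_nonneg_left hQx (Real.rpow_nonneg hy.le _)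
        calc τ (α ^ k * x)
            = (α ^ k * x) ^ (-r₀) * ((α ^ k * x) ^ r₀ * τ (α ^ k * x)) := by
              rw [← mul_assoc, ← Real.rpow_add hy]; simp
          _ ≤ (α ^ k * x) ^ (-r₀) * C₂' := h1
          _ = C₂' * (α ^ k * x) ^ (-r₀) := mul_comm _ _
      have hy_r : (α ^ k * x) ^ r = α ^ (k * r) * x ^ r := by
        rw [Real.mul_rpow hαk.le hx0.le, ← Real.rpow_mul hα.le]
      have hαsplit : α ^ (-(k * (ν + r))) * α ^ (k * r) = α ^ (-(k * ν)) := by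
        rw [← Real.rpow_add hα]; congr 1; ring
      have hexp : x ^ r * (α ^ (-(k * ν)) * (C₂' * (α ^ k * x) ^ (-r₀)))
          = C₂' * (α ^ (-(k * (ν + r))) * (α ^ k * x) ^ (r - r₀)) := by
        rw [sub_eq_add_neg, Real.rpow_add hy, hy_r, ← hαsplit]
        ring
      have hb : α ^ (-(k * (ν + r))) * (α ^ k * x) ^ (r - r₀) ≤ 1 * M ^ (r - r₀) := by
        refine mul_le_mul ?_ ?_ (Real.rpow_nonneg hy.le _) zero_le_one
        · exact Real.rpow_le_one_of_one_le_of_nonpos hα1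
            (neg_nonpos.2 (mul_nonneg hk.le (by linarith : (0:ℝ) ≤ ν + r)))
        · exact Real.rpow_le_rpow hy.le hyM (sub_nonneg.2 hr₀r)
      calc x ^ r * tauScaled τ k ν α x
          = x ^ r * (α ^ (-(k * ν)) * τ (α ^ k * x)) := rfl
        _ ≤ x ^ r * (α ^ (-(k * ν)) * (C₂' * (α ^ k * x) ^ (-r₀))) := by
            refine mul_le_mul_of_nonneg_left ?_ (Real.rpow_nonneg hx0.le r)
            exact mul_le_mul_of_nonneg_left hτy (Real.rpow_nonneg hα.le _)
        _ = C₂' * (α ^ (-(k * (ν + r))) * (α ^ k * x) ^ (r - r₀)) := hexp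
        _ ≤ C₂' * (1 * M ^ (r - r₀)) := mul_le_mul_of_nonneg_left hb hC₂nn
        _ = B₂ := by rw [one_mul]
        _ ≤ max 1 (max B B₂) := le_trans (le_max_right B B₂) (le_max_right 1 _)
    · have hle : τ (α ^ k * x) ≤ C₁ * (α ^ k * x) ^ ν :=
        hM₀ _ (le_trans (le_max_left M₀ 1) (le_of_lt (not_le.1 hyM)))
      exact (key α x hα hx0 hxA hle).trans
        (le_trans (le_max_left B B₂) (le_max_right 1 _))
end

section
/- (Technical Lemma 3.) Let L = 0 or L = +∞. Suppose τ, β : (0,∞) → (0,∞) are measurable, β/τ is integrable near 0, and there exist γ, ν ∈ ℝ with 1+γ−ν > 0 such that β(x)/τ(x) = O(x^{γ−ν}) as x → L; set k = 1/(1+γ−ν). Then for every ρ > 0 there exists ε > 0 such that, for all α near L, (1/α) ∫_0^{ε α^k} β(x)/τ(x) dx ≤ ρ; equivalently, with τ_α(x) = α^{−kν}τ(α^k x) and β_α(x) = α^{−kγ}β(α^k x), ∫_0^ε β_α(x)/τ_α(x) dx ≤ ρ for all α near L. -/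
open MeasureTheory Filter Set Topology

private lemma aux_bound (τ β : ℝ → ℝ) (hτmeas : Measurable τ) (hβmeas : Measurable β)
    (hτpos : ∀ x : ℝ, 0 < x → 0 < τ x) (hβpos : ∀ x : ℝ, 0 < x → 0 < β x)
    (ν γ : ℝ) (hνγ : 0 < 1 + γ - ν) (C' : ℝ) (hC' : 0 ≤ C')
    (M T : ℝ) (hM : 0 ≤ M) (hMT : M ≤ T)
    (hbd : ∀ x ∈ Ioc M T, β x ≤ C' * (x ^ (γ - ν) * τ x)) :
    IntegrableOn (fun x => β x / τ x) (Ioc M T) volume ∧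
      ∫ x in Ioc M T, β x / τ x ≤ C' * T ^ (1 + γ - ν) / (1 + γ - ν) := by
  have hT0 : 0 ≤ T := hM.trans hMT
  have hrpow : (-1 : ℝ) < γ - ν := by linarith
  have hg_int0 : IntegrableOn (fun x => C' * x ^ (γ - ν)) (Ioc 0 T) volume := by
    have h1 : IntervalIntegrable (fun x : ℝ => x ^ (γ - ν)) volume 0 T :=
      intervalIntegral.intervalIntegrable_rpow' hrpow
    exact ((intervalIntegrable_iff_integrableOn_Ioc_of_le hT0).mp h1).const_mul C'
  have hg_int : IntegrableOn (fun x => C' * x ^ (γ - ν)) (Ioc M T) volume :=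
    hg_int0.mono_set (Ioc_subset_Ioc_left hM)
  have hpt : ∀ x ∈ Ioc M T, β x / τ x ≤ C' * x ^ (γ - ν) := by
    intro x hx
    have hx0 : 0 < x := lt_of_le_of_lt hM hx.1
    rw [div_le_iff₀ (hτpos x hx0)]
    calc β x ≤ C' * (x ^ (γ - ν) * τ x) := hbd x hx
      _ = C' * x ^ (γ - ν) * τ x := by ring
  have hf_int : IntegrableOn (fun x => β x / τ x) (Ioc M T) volume := by
    refine hg_int.mono' ((hβmeas.div hτmeas).aestronglyMeasurable.restrict) ?_
    refine (ae_restrict_iff' measurableSet_Ioc).mpr (ae_of_all _ fun x hx => ?_)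
    have hx0 : 0 < x := lt_of_le_of_lt hM hx.1
    rw [Real.norm_eq_abs, abs_of_nonneg (div_nonneg (hβpos x hx0).le (hτpos x hx0).le)]
    exact hpt x hx
  refine ⟨hf_int, ?_⟩
  have hstep1 : ∫ x in Ioc M T, β x / τ x ≤ ∫ x in Ioc M T, C' * x ^ (γ - ν) :=
    setIntegral_mono_on hf_int hg_int measurableSet_Ioc hpt
  have hstep2 : ∫ x in Ioc M T, C' * x ^ (γ - ν) ≤ ∫ x in Ioc 0 T, C' * x ^ (γ - ν) := by
    refine setIntegral_mono_set hg_int0 ?_ (HasSubset.Subset.eventuallyLE (Ioc_subset_Ioc_left hM))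
    refine (ae_restrict_iff' measurableSet_Ioc).mpr (ae_of_all _ fun x hx => ?_)
    exact mul_nonneg hC' (Real.rpow_nonneg hx.1.le _)
  have hstep3 : ∫ x in Ioc 0 T, C' * x ^ (γ - ν) = C' * T ^ (1 + γ - ν) / (1 + γ - ν) := by
    rw [MeasureTheory.integral_const_mul, ← intervalIntegral.integral_of_le hT0,
      integral_rpow (Or.inl hrpow), Real.zero_rpow (by linarith : γ - ν + 1 ≠ 0),
      (by ring : γ - ν + 1 = 1 + γ - ν)]
    ring
  calc ∫ x in Ioc M T, β x / τ x ≤ ∫ x in Ioc 0 T, C' * x ^ (γ - ν) := hstep1.trans hstep2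
    _ = C' * T ^ (1 + γ - ν) / (1 + γ - ν) := hstep3

/-- Technical Lemma 3: if `β/τ` is integrable near `0` and `β/τ = O(x^{γ-ν})` as `x → L` with
`1+γ-ν > 0` and `k = 1/(1+γ-ν)`, then for every `ρ > 0` there is `ε > 0` such that
`(1/α) ∫_0^{ε α^k} β/τ ≤ ρ` for all `α` near `L`. -/
theorem tech_lemma_three
    (τ β : ℝ → ℝ) (hτmeas : Measurable τ) (hβmeas : Measurable β)
    (hτpos : ∀ x : ℝ, 0 < x → 0 < τ x) (hβpos : ∀ x : ℝ, 0 < x → 0 < β x)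
    (ℓ : Filter ℝ) (hℓ : ℓ = nhdsWithin 0 (Ioi 0) ∨ ℓ = atTop)
    (hint : ∃ a : ℝ, 0 < a ∧ IntegrableOn (fun x => β x / τ x) (Ioc 0 a) volume)
    (ν γ : ℝ) (hνγ : 0 < 1 + γ - ν)
    (hO : ∃ C : ℝ, ∀ᶠ x in ℓ, β x ≤ C * (x ^ (γ - ν) * τ x)) :
    ∀ ρ : ℝ, 0 < ρ → ∃ ε : ℝ, 0 < ε ∧ ∀ᶠ α in ℓ,
      (1 / α) * ∫ x in Ioc (0:ℝ) (ε * α ^ (1 / (1 + γ - ν))), β x / τ x ≤ ρ := by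
  intro ρ hρ
  set p : ℝ := 1 + γ - ν with hp
  have hppos : 0 < p := hνγ
  have hk : 0 < 1 / p := by positivity
  obtain ⟨C, hC⟩ := hO
  set C' : ℝ := max C 1 with hC'def
  have hC'pos : 0 < C' := lt_of_lt_of_le one_pos (le_max_right _ _)
  have hxpos : ∀ᶠ x in ℓ, 0 < x := by
    rcases hℓ with h | h <;> subst h
    · exact self_mem_nhdsWithin
    · exact eventually_gt_atTop 0
  have hO' : ∀ᶠ x in ℓ, 0 < x ∧ β x ≤ C' * (x ^ (γ - ν) * τ x) := by
    filter_upwards [hC, hxpos] with x h1 h2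
    refine ⟨h2, h1.trans ?_⟩
    exact mul_le_mul_of_nonneg_right (le_max_left _ _)
      (mul_nonneg (Real.rpow_nonneg h2.le _) (hτpos x h2).le)
  rcases hℓ with h | h <;> subst h
  · -- case ℓ = 𝓝[>] 0
    obtain ⟨δ, hδ, hsub⟩ := mem_nhdsGT_iff_exists_Ioo_subset.mp hO'
    have hδ0 : (0:ℝ) < δ := hδ
    refine ⟨(ρ * p / C') ^ (1 / p), Real.rpow_pos_of_pos (by positivity) _, ?_⟩
    set ε := (ρ * p / C') ^ (1 / p) with hεdef
    have hε : 0 < ε := Real.rpow_pos_of_pos (by positivity) _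
    have hεp : ε ^ p = ρ * p / C' := by
      rw [hεdef, one_div, Real.rpow_inv_rpow (by positivity) hppos.ne']
    have hT0 : Tendsto (fun α : ℝ => ε * α ^ (1 / p)) (nhdsWithin 0 (Ioi 0)) (nhds 0) := by
      have h1 : Tendsto (fun α : ℝ => α ^ (1 / p)) (nhdsWithin 0 (Ioi 0)) (nhds 0) := by
        have h2 := (Real.continuousAt_rpow_const 0 (1 / p) (Or.inr hk.le)).tendsto
        simpa [one_div, Real.zero_rpow (inv_ne_zero hppos.ne')] using h2.mono_left nhdsWithin_le_nhds
      simpa using h1.const_mul ε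
    filter_upwards [self_mem_nhdsWithin, hT0.eventually_lt_const hδ0] with α hα hαδ
    have hα0 : (0:ℝ) < α := hα
    have hTpos : 0 < ε * α ^ (1 / p) := mul_pos hε (Real.rpow_pos_of_pos hα0 _)
    have hbd : ∀ x ∈ Ioc (0:ℝ) (ε * α ^ (1 / p)), β x ≤ C' * (x ^ (γ - ν) * τ x) :=
      fun x hx => (hsub ⟨hx.1, lt_of_le_of_lt hx.2 hαδ⟩).2
    obtain ⟨-, hI⟩ := aux_bound τ β hτmeas hβmeas hτpos hβpos ν γ hνγ C' hC'pos.le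
      0 (ε * α ^ (1 / p)) le_rfl hTpos.le hbd
    have hTp : (ε * α ^ (1 / p)) ^ p = ε ^ p * α := by
      rw [Real.mul_rpow hε.le (Real.rpow_pos_of_pos hα0 _).le, ← Real.rpow_mul hα0.le,
        one_div, inv_mul_cancel₀ hppos.ne', Real.rpow_one]
    have key : C' * (ε * α ^ (1 / p)) ^ p / p = ρ * α := by
      rw [hTp, hεp]; field_simp
    calc (1 / α) * ∫ x in Ioc (0:ℝ) (ε * α ^ (1 / p)), β x / τ x
        ≤ (1 / α) * (ρ * α) := by
          rw [← key]; exact mul_le_mul_of_nonneg_left hI (by positivity)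
      _ = ρ := by field_simp
  · -- case ℓ = atTop
    obtain ⟨M0, hM0⟩ := eventually_atTop.mp hO'
    set M : ℝ := max M0 1 with hMdef
    have hMpos : (0:ℝ) < M := lt_of_lt_of_le one_pos (le_max_right _ _)
    by_cases hInt : IntegrableOn (fun x => β x / τ x) (Ioc 0 M) volume
    · set J := ∫ x in Ioc (0:ℝ) M, β x / τ x with hJdef
      have hJ0 : 0 ≤ J := setIntegral_nonneg measurableSet_Ioc
        (fun x hx => div_nonneg (hβpos x hx.1).le (hτpos x hx.1).le)
      refine ⟨(ρ / 2 * p / C') ^ (1 / p), Real.rpow_pos_of_pos (by positivity) _, ?_⟩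
      set ε := (ρ / 2 * p / C') ^ (1 / p) with hεdef
      have hε : 0 < ε := Real.rpow_pos_of_pos (by positivity) _
      have hεp : ε ^ p = ρ / 2 * p / C' := by
        rw [hεdef, one_div, Real.rpow_inv_rpow (by positivity) hppos.ne']
      have ht : Tendsto (fun α : ℝ => ε * α ^ (1 / p)) atTop atTop :=
        (tendsto_rpow_atTop hk).const_mul_atTop hε
      filter_upwards [eventually_ge_atTop (max 1 (2 * J / ρ)), ht.eventually_ge_atTop M]
        with α hαge hTM
      have hα1 : (1:ℝ) ≤ α := le_trans (le_max_left _ _) hαge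
      have hα0 : (0:ℝ) < α := lt_of_lt_of_le one_pos hα1
      have hbd2 : ∀ x ∈ Ioc M (ε * α ^ (1 / p)), β x ≤ C' * (x ^ (γ - ν) * τ x) :=
        fun x hx => (hM0 x (le_trans (le_max_left _ _) hx.1.le)).2
      obtain ⟨hint2, hI2⟩ := aux_bound τ β hτmeas hβmeas hτpos hβpos ν γ hνγ C' hC'pos.le
        M (ε * α ^ (1 / p)) hMpos.le hTM hbd2
      have hsplit : ∫ x in Ioc (0:ℝ) (ε * α ^ (1 / p)), β x / τ x
          = J + ∫ x in Ioc M (ε * α ^ (1 / p)), β x / τ x := by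
        rw [← Ioc_union_Ioc_eq_Ioc hMpos.le hTM,
          setIntegral_union (Set.Ioc_disjoint_Ioc_of_le le_rfl) measurableSet_Ioc hInt hint2]
      have hTp : (ε * α ^ (1 / p)) ^ p = ε ^ p * α := by
        rw [Real.mul_rpow hε.le (Real.rpow_pos_of_pos hα0 _).le, ← Real.rpow_mul hα0.le,
          one_div, inv_mul_cancel₀ hppos.ne', Real.rpow_one]
      have key : C' * (ε * α ^ (1 / p)) ^ p / p = ρ / 2 * α := by
        rw [hTp, hεp]; field_simp
      have hJle : J ≤ ρ / 2 * α := by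
        have h1 : 2 * J / ρ ≤ α := le_trans (le_max_right _ _) hαge
        have h2 := mul_le_mul_of_nonneg_right h1 (half_pos hρ).le
        calc J = 2 * J / ρ * (ρ / 2) := by field_simp
          _ ≤ α * (ρ / 2) := h2
          _ = ρ / 2 * α := mul_comm _ _
      have hI2' : ∫ x in Ioc M (ε * α ^ (1 / p)), β x / τ x ≤ ρ / 2 * α := key ▸ hI2
      calc (1 / α) * ∫ x in Ioc (0:ℝ) (ε * α ^ (1 / p)), β x / τ x
          ≤ (1 / α) * (ρ * α) := by
            rw [hsplit]
            refine mul_le_mul_of_nonneg_left ?_ (by positivity)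
            linarith
        _ = ρ := by field_simp
    · refine ⟨1, one_pos, ?_⟩
      have ht : Tendsto (fun α : ℝ => α ^ (1 / p)) atTop atTop := tendsto_rpow_atTop hk
      filter_upwards [eventually_gt_atTop 0, ht.eventually_ge_atTop M] with α hα0 hαM
      have hni : ¬ IntegrableOn (fun x => β x / τ x) (Ioc (0:ℝ) (1 * α ^ (1 / p))) volume :=
        fun h => hInt (h.mono_set (Ioc_subset_Ioc_right (by simpa using hαM)))
      rw [integral_undef hni, mul_zero]
      exact hρ.le
end

section
/- (Polymerization dependency, vanishing growth.) Assume the standing assumptions, that β is locally essentially bounded on (0,∞), and that limsup_{x→∞} τ(x)/x < ∞. For each α > 0 let (λ_α, U_α) be a solution of the eigenproblem for (ατ, β, κ). Then limsup_{α→0⁺} λ_α ≤ limsup_{x→0⁺} β(x) (essential limsup, valued in [0,+∞]). -/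
open MeasureTheory Filter Set Topology

section AuxHelpers

/-- The exhausting sequence of sets. -/
private lemma aux_union_Ioc : (⋃ n : ℕ, Ioc ((n : ℝ) + 1)⁻¹ ((n : ℝ) + 1)) = Ioi (0:ℝ) := by
  ext x
  simp only [mem_iUnion, mem_Ioc, mem_Ioi]
  constructor
  · rintro ⟨n, h1, _⟩
    exact lt_trans (by positivity) h1
  · intro hx
    obtain ⟨n, hn⟩ := exists_nat_gt (max x x⁻¹)
    have hn1 : max x x⁻¹ < (n : ℝ) + 1 := lt_trans hn (by linarith)
    have hx1 : x ≤ (n : ℝ) + 1 := le_of_lt (lt_of_le_of_lt (le_max_left x x⁻¹) hn1)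
    have hxi : x⁻¹ < (n : ℝ) + 1 := lt_of_le_of_lt (le_max_right x x⁻¹) hn1
    have hni : (0:ℝ) < (n : ℝ) + 1 := by positivity
    refine ⟨n, ?_, hx1⟩
    rw [inv_lt_comm₀ hx hni] at hxi
    exact hxi

private lemma aux_mono_Ioc : Monotone (fun n : ℕ => Ioc ((n : ℝ) + 1)⁻¹ ((n : ℝ) + 1)) := by
  intro m n hmn
  apply Set.Ioc_subset_Ioc
  · apply inv_anti₀ (by positivity)
    exact_mod_cast by exact_mod_cast add_le_add_left (Nat.cast_le.2 hmn) 1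
  · exact_mod_cast add_le_add_left (Nat.cast_le.2 hmn) 1

private lemma tendsto_setIntegral_Ioc_Ioi (f : ℝ → ℝ) (hf : IntegrableOn f (Ioi 0) volume) :
    Tendsto (fun n : ℕ => ∫ x in Ioc ((n : ℝ) + 1)⁻¹ ((n : ℝ) + 1), f x) atTop
      (nhds (∫ x in Ioi (0:ℝ), f x)) := by
  have h := MeasureTheory.tendsto_setIntegral_of_monotone
    (s := fun n : ℕ => Ioc ((n : ℝ) + 1)⁻¹ ((n : ℝ) + 1)) (f := f) (μ := volume)
    (fun n => measurableSet_Ioc) aux_mono_Ioc (by rw [aux_union_Ioc]; exact hf)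
  rwa [aux_union_Ioc] at h

end AuxHelpers
section KernelLemmas

variable {κ : ℝ → ℝ → ℝ}

private lemma kernel_slice_meas (hκ : Measurable (Function.uncurry κ)) (y : ℝ) :
    Measurable fun x => κ x y :=
  hκ.comp (measurable_id.prodMk measurable_const)

private lemma kernel_slice_meas' (hκ : Measurable (Function.uncurry κ)) (x : ℝ) :
    Measurable fun y => κ x y :=
  hκ.comp (measurable_const.prodMk measurable_id)

private lemma kernel_int_mass (hκ : Measurable (Function.uncurry κ))
    (hmass : ∀ y : ℝ, 0 < y → (∫ x in Ioc (0:ℝ) y, κ x y) = 1)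
    {y : ℝ} (hy : 0 < y) : IntegrableOn (fun x => κ x y) (Ioc 0 y) volume := by
  by_contra h
  have h2 := hmass y hy
  rw [MeasureTheory.integral_undef h] at h2
  exact one_ne_zero h2.symm

private lemma kernel_int_mean (hκ : Measurable (Function.uncurry κ))
    (hmean : ∀ y : ℝ, 0 < y → (∫ x in Ioc (0:ℝ) y, x * κ x y) = y / 2)
    {y : ℝ} (hy : 0 < y) : IntegrableOn (fun x => x * κ x y) (Ioc 0 y) volume := by
  by_contra h
  have h2 := hmean y hy
  rw [MeasureTheory.integral_undef h] at h2
  have : y = 0 := by linarith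
  exact hy.ne' this

private lemma kernel_int_sq (hκ : Measurable (Function.uncurry κ))
    (hκn : ∀ x y : ℝ, 0 ≤ κ x y)
    (hmean : ∀ y : ℝ, 0 < y → (∫ x in Ioc (0:ℝ) y, x * κ x y) = y / 2)
    {y : ℝ} (hy : 0 < y) : IntegrableOn (fun x => x ^ 2 * κ x y) (Ioc 0 y) volume := by
  apply Integrable.mono' (((kernel_int_mean hκ hmean hy).const_mul y))
  · exact ((measurable_id.pow_const 2).mul (kernel_slice_meas hκ y)).aestronglyMeasurable
  · filter_upwards [ae_restrict_mem measurableSet_Ioc] with x hx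
    have h1 : 0 < x := hx.1
    have h2 : x ≤ y := hx.2
    have h3 : 0 ≤ κ x y := hκn x y
    rw [Real.norm_eq_abs, abs_of_nonneg (mul_nonneg (sq_nonneg x) h3)]
    have he : x ^ 2 * κ x y = x * (x * κ x y) := by ring
    rw [he]
    exact mul_le_mul_of_nonneg_right h2 (mul_nonneg h1.le h3)

/-- second moment bound, in real form -/
private lemma kernel_sq_bound (hκ : Measurable (Function.uncurry κ))
    (hκn : ∀ x y : ℝ, 0 ≤ κ x y)
    (hmean : ∀ y : ℝ, 0 < y → (∫ x in Ioc (0:ℝ) y, x * κ x y) = y / 2)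
    {c : ℝ} (hc : ∀ y : ℝ, 0 < y → (∫ x in Ioc (0:ℝ) y, (x / y) ^ 2 * κ x y) ≤ c)
    {y : ℝ} (hy : 0 < y) : (∫ x in Ioc (0:ℝ) y, x ^ 2 * κ x y) ≤ c * y ^ 2 := by
  have h1 : (∫ x in Ioc (0:ℝ) y, x ^ 2 * κ x y)
      = y ^ 2 * ∫ x in Ioc (0:ℝ) y, (x / y) ^ 2 * κ x y := by
    rw [← integral_const_mul]
    apply setIntegral_congr_fun measurableSet_Ioc
    intro x hx
    field_simp
  rw [h1]
  have h2 := hc y hy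
  nlinarith [sq_nonneg y]

/-- `c` in the second-moment bound can be upgraded to be nonnegative... derive `0 ≤ c`
from the bound at `y = 1` requires integrability; instead we show the integral is nonneg. -/
private lemma kernel_sq_int_nonneg (hκn : ∀ x y : ℝ, 0 ≤ κ x y) (y : ℝ) :
    0 ≤ ∫ x in Ioc (0:ℝ) y, x ^ 2 * κ x y :=
  setIntegral_nonneg measurableSet_Ioc fun x _ => mul_nonneg (sq_nonneg x) (hκn x y)

private lemma kernel_I0 (hκ : Measurable (Function.uncurry κ))
    (hκn : ∀ x y : ℝ, 0 ≤ κ x y)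
    (hmass : ∀ y : ℝ, 0 < y → (∫ x in Ioc (0:ℝ) y, κ x y) = 1)
    {y : ℝ} (hy : 0 < y) :
    ∫⁻ x in Ioc (0:ℝ) y, ENNReal.ofReal (x ^ (0:ℝ) * κ x y) = 1 := by
  have h1 : ∫⁻ x in Ioc (0:ℝ) y, ENNReal.ofReal (x ^ (0:ℝ) * κ x y)
      = ∫⁻ x in Ioc (0:ℝ) y, ENNReal.ofReal (κ x y) := by
    apply setLIntegral_congr_fun measurableSet_Ioc
    intro x hx
    dsimp only
    rw [Real.rpow_zero, one_mul]
  rw [h1, ← MeasureTheory.ofReal_integral_eq_lintegral_ofReal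
    (kernel_int_mass hκ hmass hy) (Filter.Eventually.of_forall fun x => hκn x y),
    hmass y hy, ENNReal.ofReal_one]

private lemma kernel_Ip (hκ : Measurable (Function.uncurry κ))
    (hκn : ∀ x y : ℝ, 0 ≤ κ x y)
    (hmean : ∀ y : ℝ, 0 < y → (∫ x in Ioc (0:ℝ) y, x * κ x y) = y / 2)
    {c : ℝ} (hcn : 0 ≤ c)
    (hc : ∀ y : ℝ, 0 < y → (∫ x in Ioc (0:ℝ) y, (x / y) ^ 2 * κ x y) ≤ c)
    {q : ℝ} (hq : 2 ≤ q) {y : ℝ} (hy : 0 < y) :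
    ∫⁻ x in Ioc (0:ℝ) y, ENNReal.ofReal (x ^ q * κ x y) ≤ ENNReal.ofReal (c * y ^ q) := by
  have step1 : ∫⁻ x in Ioc (0:ℝ) y, ENNReal.ofReal (x ^ q * κ x y)
      ≤ ∫⁻ x in Ioc (0:ℝ) y, ENNReal.ofReal (y ^ (q - 2) * (x ^ 2 * κ x y)) := by
    apply setLIntegral_mono_ae
    · exact ((measurable_const.mul ((measurable_id.pow_const 2).mul
          (kernel_slice_meas hκ y))).ennreal_ofReal).aemeasurable
    filter_upwards with x hx
    apply ENNReal.ofReal_le_ofReal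
    have hx1 : 0 < x := hx.1
    have hx2 : x ≤ y := hx.2
    have hxq : x ^ q = x ^ (q - 2) * x ^ 2 := by
      rw [← Real.rpow_natCast x 2, ← Real.rpow_add hx1]
      norm_num
    rw [hxq]
    have h1 : x ^ (q - 2) ≤ y ^ (q - 2) := Real.rpow_le_rpow hx1.le hx2 (by linarith)
    have h2 : 0 ≤ x ^ 2 * κ x y := mul_nonneg (sq_nonneg x) (hκn x y)
    have h3 : (0:ℝ) ≤ x ^ (q-2) := Real.rpow_nonneg hx1.le _
    nlinarith
  have step2 : ∫⁻ x in Ioc (0:ℝ) y, ENNReal.ofReal (y ^ (q - 2) * (x ^ 2 * κ x y))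
      = ENNReal.ofReal (y ^ (q-2)) * ∫⁻ x in Ioc (0:ℝ) y, ENNReal.ofReal (x ^ 2 * κ x y) := by
    rw [← lintegral_const_mul' _ _ ENNReal.ofReal_ne_top]
    apply setLIntegral_congr_fun measurableSet_Ioc
    intro x hx
    dsimp only
    rw [ENNReal.ofReal_mul (Real.rpow_nonneg hy.le _)]
  have step3 : ∫⁻ x in Ioc (0:ℝ) y, ENNReal.ofReal (x ^ 2 * κ x y)
      ≤ ENNReal.ofReal (c * y ^ 2) := by
    rw [← MeasureTheory.ofReal_integral_eq_lintegral_ofReal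
      (kernel_int_sq hκ hκn hmean hy)
      (Filter.Eventually.of_forall fun x => mul_nonneg (sq_nonneg x) (hκn x y))]
    exact ENNReal.ofReal_le_ofReal (kernel_sq_bound hκ hκn hmean hc hy)
  calc ∫⁻ x in Ioc (0:ℝ) y, ENNReal.ofReal (x ^ q * κ x y)
      ≤ ENNReal.ofReal (y ^ (q-2)) * ∫⁻ x in Ioc (0:ℝ) y, ENNReal.ofReal (x ^ 2 * κ x y) := by
        rw [← step2]; exact step1
    _ ≤ ENNReal.ofReal (y ^ (q-2)) * ENNReal.ofReal (c * y ^ 2) :=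
        mul_le_mul_right step3 _
    _ = ENNReal.ofReal (c * y ^ q) := by
        rw [← ENNReal.ofReal_mul (Real.rpow_nonneg hy.le _)]
        congr 1
        have : y ^ q = y ^ (q - 2) * y ^ 2 := by
          rw [← Real.rpow_natCast y 2, ← Real.rpow_add hy]
          norm_num
        rw [this]; ring

end KernelLemmas
section Tonelli

private lemma tonelli_key {β V' : ℝ → ℝ} {κ : ℝ → ℝ → ℝ}
    (hβm : Measurable β) (hV'm : Measurable V')
    (hκ : Measurable (Function.uncurry κ))
    (hβn : ∀ y : ℝ, 0 < y → 0 ≤ β y) (hV'n : ∀ y, 0 ≤ V' y)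
    (hκn : ∀ x y : ℝ, 0 ≤ κ x y) {q : ℝ} (hq : 0 ≤ q) :
    ∫⁻ x in Ioi (0:ℝ), ENNReal.ofReal (x ^ q)
        * ∫⁻ y in Ioi x, ENNReal.ofReal (β y * κ x y * V' y)
      = ∫⁻ y in Ioi (0:ℝ), ENNReal.ofReal (β y * V' y)
        * ∫⁻ x in Ioc (0:ℝ) y, ENNReal.ofReal (x ^ q * κ x y) := by
  set f : ℝ → ℝ → ENNReal := fun x y =>
    if x < y then ENNReal.ofReal (x ^ q) * ENNReal.ofReal (β y * κ x y * V' y) else 0 with hf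
  have hfm : Measurable (Function.uncurry f) := by
    apply Measurable.ite (measurableSet_lt measurable_fst measurable_snd)
    · refine Measurable.mul (f := fun x : ℝ × ℝ => ENNReal.ofReal (x.1 ^ q)) (g := fun x : ℝ × ℝ => ENNReal.ofReal (β x.2 * κ x.1 x.2 * V' x.2)) ?_ ?_
      · exact ((Real.continuous_rpow_const hq).measurable.comp measurable_fst).ennreal_ofReal
      · apply Measurable.ennreal_ofReal
        exact ((hβm.comp measurable_snd).mul hκ).mul (hV'm.comp measurable_snd)
    · exact measurable_const
  have step1 : ∀ x : ℝ, 0 < x →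
      ENNReal.ofReal (x ^ q) * (∫⁻ y in Ioi x, ENNReal.ofReal (β y * κ x y * V' y))
        = ∫⁻ y in Ioi (0:ℝ), f x y := by
    intro x hx
    rw [← lintegral_const_mul' _ _ ENNReal.ofReal_ne_top]
    have h1 : ∀ y : ℝ, f x y = (Ioi x).indicator
        (fun y => ENNReal.ofReal (x ^ q) * ENNReal.ofReal (β y * κ x y * V' y)) y := by
      intro y
      simp [hf, Set.indicator_apply, mem_Ioi]
    rw [lintegral_congr h1, lintegral_indicator measurableSet_Ioi,
      Measure.restrict_restrict measurableSet_Ioi]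
    congr 1
    rw [Set.inter_eq_left.2 (Ioi_subset_Ioi hx.le)]
  have step2 : ∀ y : ℝ, 0 < y →
      (∫⁻ x in Ioi (0:ℝ), f x y)
        = ENNReal.ofReal (β y * V' y) * ∫⁻ x in Ioc (0:ℝ) y, ENNReal.ofReal (x ^ q * κ x y) := by
    intro y hy
    have h1 : ∀ x : ℝ, f x y = (Iio y).indicator
        (fun x => ENNReal.ofReal (x ^ q) * ENNReal.ofReal (β y * κ x y * V' y)) x := by
      intro x
      simp [hf, Set.indicator_apply, mem_Iio]
    rw [lintegral_congr h1, lintegral_indicator measurableSet_Iio,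
      Measure.restrict_restrict measurableSet_Iio]
    have h2 : Iio y ∩ Ioi (0:ℝ) = Ioo 0 y := by
      ext z; simp [mem_Iio, mem_Ioi, mem_Ioo, and_comm]
    rw [h2, setLIntegral_congr (Ioo_ae_eq_Ioc (a := (0:ℝ)) (b := y))]
    rw [← lintegral_const_mul' _ _ ENNReal.ofReal_ne_top]
    apply setLIntegral_congr_fun measurableSet_Ioc
    intro x hx
    dsimp only
    rw [← ENNReal.ofReal_mul (Real.rpow_nonneg hx.1.le q),
      ← ENNReal.ofReal_mul (mul_nonneg (hβn y hy) (hV'n y))]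
    congr 1
    ring
  calc ∫⁻ x in Ioi (0:ℝ), ENNReal.ofReal (x ^ q)
        * ∫⁻ y in Ioi x, ENNReal.ofReal (β y * κ x y * V' y)
      = ∫⁻ x in Ioi (0:ℝ), ∫⁻ y in Ioi (0:ℝ), f x y := by
        apply setLIntegral_congr_fun measurableSet_Ioi
        intro x hx
        dsimp only
        exact step1 x hx
    _ = ∫⁻ y in Ioi (0:ℝ), ∫⁻ x in Ioi (0:ℝ), f x y :=
        lintegral_lintegral_swap hfm.aemeasurable
    _ = ∫⁻ y in Ioi (0:ℝ), ENNReal.ofReal (β y * V' y)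
        * ∫⁻ x in Ioc (0:ℝ) y, ENNReal.ofReal (x ^ q * κ x y) := by
        apply setLIntegral_congr_fun measurableSet_Ioi
        intro y hy
        dsimp only
        exact step2 y hy

end Tonelli

section Master

private lemma master_identity (T β : ℝ → ℝ) (κ : ℝ → ℝ → ℝ) (lam : ℝ) (V : ℝ → ℝ)
    (S : EigenSolution T β κ lam V) (p : ℝ) (hp : 0 ≤ p)
    (hg1 : IntegrableOn (fun x => p * x ^ (p-1) * (T x * V x)) (Ioi 0) volume)
    (hF : IntegrableOn (fun x => x ^ p * (∫ y in Ioi x, β y * κ x y * V y)) (Ioi 0) volume) :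
    (∫ x in Ioi (0:ℝ), x ^ p * (β x * V x)) + lam * ∫ x in Ioi (0:ℝ), x ^ p * V x
      = (∫ x in Ioi (0:ℝ), p * x ^ (p-1) * (T x * V x))
        + 2 * ∫ x in Ioi (0:ℝ), x ^ p * (∫ y in Ioi x, β y * κ x y * V y) := by
  set F : ℝ → ℝ := fun x => ∫ y in Ioi x, β y * κ x y * V y with hFdef
  set D : ℝ → ℝ := fun x =>
    p * x ^ (p-1) * (T x * V x) + x ^ p * (2 * F x - (β x + lam) * V x) with hDdef
  have hderiv : ∀ x : ℝ, 0 < x → HasDerivAt (fun x => x ^ p * (T x * V x)) (D x) x := by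
    intro x hx
    have h1 : HasDerivAt (fun x : ℝ => x ^ p) (p * x ^ (p-1)) x :=
      Real.hasDerivAt_rpow_const (Or.inl hx.ne')
    have h2 := S.eqn x hx
    exact h1.mul h2
  have hβint := S.int_betaU p hp
  have hUint := S.int_U p hp
  -- per-n identity
  have key : ∀ n : ℕ,
      (∫ x in Ioc ((n:ℝ)+1)⁻¹ ((n:ℝ)+1), p * x ^ (p-1) * (T x * V x))
        + (2 * (∫ x in Ioc ((n:ℝ)+1)⁻¹ ((n:ℝ)+1), x ^ p * F x)
          - ((∫ x in Ioc ((n:ℝ)+1)⁻¹ ((n:ℝ)+1), x ^ p * (β x * V x))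
            + lam * ∫ x in Ioc ((n:ℝ)+1)⁻¹ ((n:ℝ)+1), x ^ p * V x))
      = ((n:ℝ)+1) ^ p * (T ((n:ℝ)+1) * V ((n:ℝ)+1))
        - (((n:ℝ)+1)⁻¹) ^ p * (T (((n:ℝ)+1)⁻¹) * V (((n:ℝ)+1)⁻¹)) := by
    intro n
    set a : ℝ := ((n:ℝ)+1)⁻¹ with ha
    set b : ℝ := (n:ℝ)+1 with hb
    have hbpos : (0:ℝ) < b := by positivity
    have hapos : (0:ℝ) < a := by positivity
    have hab : a ≤ b := by
      rw [ha, hb]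
      have h1 : (1:ℝ) ≤ (n:ℝ) + 1 := by
        have : (0:ℝ) ≤ (n:ℝ) := Nat.cast_nonneg n
        linarith
      calc ((n:ℝ)+1)⁻¹ ≤ 1 := by
            rw [inv_le_one_iff₀]; right; exact h1
        _ ≤ (n:ℝ)+1 := h1
    have hsub : Icc a b ⊆ Ioi (0:ℝ) := fun x hx => lt_of_lt_of_le hapos hx.1
    have hsub' : Ioc a b ⊆ Ioi (0:ℝ) := fun x hx => lt_of_lt_of_le hapos hx.1.le
    have hI1 : IntegrableOn (fun x => p * x ^ (p-1) * (T x * V x)) (Ioc a b) volume :=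
      hg1.mono_set (hsub'.trans (subset_refl _))
    have hIF : IntegrableOn (fun x => x ^ p * F x) (Ioc a b) volume :=
      hF.mono_set hsub'
    have hIβ : IntegrableOn (fun x => x ^ p * (β x * V x)) (Ioc a b) volume :=
      hβint.mono_set hsub'
    have hIU : IntegrableOn (fun x => x ^ p * V x) (Ioc a b) volume :=
      hUint.mono_set hsub'
    have hIF2 : IntegrableOn (fun x => 2 * (x ^ p * F x)) (Ioc a b) volume :=
      hIF.const_mul 2
    have hIU2 : IntegrableOn (fun x => lam * (x ^ p * V x)) (Ioc a b) volume :=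
      hIU.const_mul lam
    have hIβU : IntegrableOn (fun x => x ^ p * (β x * V x) + lam * (x ^ p * V x))
        (Ioc a b) volume := hIβ.add hIU2
    have hrest : IntegrableOn (fun x => 2 * (x ^ p * F x)
        - (x ^ p * (β x * V x) + lam * (x ^ p * V x))) (Ioc a b) volume := hIF2.sub hIβU
    have hDint : IntegrableOn D (Ioc a b) volume := by
      have hcomb : IntegrableOn (fun x => p * x ^ (p-1) * (T x * V x)
          + (2 * (x ^ p * F x) - (x ^ p * (β x * V x) + lam * (x ^ p * V x)))) (Ioc a b) volume :=
        hI1.add hrest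
      apply hcomb.congr_fun _ measurableSet_Ioc
      intro x _
      simp only [hDdef]
      ring
    have hftc : (∫ x in a..b, D x)
        = b ^ p * (T b * V b) - a ^ p * (T a * V a) := by
      refine intervalIntegral.integral_eq_sub_of_hasDerivAt
        (f := fun x => x ^ p * (T x * V x)) (f' := D) ?_ ?_
      · intro x hx
        rw [uIcc_of_le hab] at hx
        exact hderiv x (hsub hx)
      · rw [intervalIntegrable_iff_integrableOn_Ioc_of_le hab]
        exact hDint
    rw [intervalIntegral.integral_of_le hab] at hftc
    have hsplit : (∫ x in Ioc a b, D x)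
        = (∫ x in Ioc a b, p * x ^ (p-1) * (T x * V x))
          + (2 * (∫ x in Ioc a b, x ^ p * F x)
            - ((∫ x in Ioc a b, x ^ p * (β x * V x)) + lam * ∫ x in Ioc a b, x ^ p * V x)) := by
      have hDeq : ∀ᵐ x ∂(volume.restrict (Ioc a b)), D x
          = p * x ^ (p-1) * (T x * V x)
            + (2 * (x ^ p * F x) - (x ^ p * (β x * V x) + lam * (x ^ p * V x))) := by
        filter_upwards with x
        simp only [hDdef]; ring
      rw [integral_congr_ae hDeq, integral_add hI1 hrest,
        integral_sub hIF2 hIβU, integral_add hIβ hIU2, integral_const_mul, integral_const_mul]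
    rw [hsplit] at hftc
    linarith [hftc]
  -- limits
  have hblim : Tendsto (fun n : ℕ => ((n:ℝ)+1) ^ p * (T ((n:ℝ)+1) * V ((n:ℝ)+1))) atTop (nhds 0) := by
    have h1 : Tendsto (fun n : ℕ => (n:ℝ)+1) atTop atTop :=
      tendsto_atTop_add_const_right _ 1 tendsto_natCast_atTop_atTop
    exact (S.lim_top p hp).comp h1
  have halim : Tendsto (fun n : ℕ => (((n:ℝ)+1)⁻¹) ^ p
      * (T (((n:ℝ)+1)⁻¹) * V (((n:ℝ)+1)⁻¹))) atTop (nhds 0) := by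
    have h1 : Tendsto (fun n : ℕ => ((n:ℝ)+1)⁻¹) atTop (nhdsWithin 0 (Ioi 0)) := by
      apply tendsto_nhdsWithin_of_tendsto_nhds_of_eventually_within
      · have h2 : Tendsto (fun n : ℕ => (n:ℝ)+1) atTop atTop :=
          tendsto_atTop_add_const_right _ 1 tendsto_natCast_atTop_atTop
        exact tendsto_inv_atTop_zero.comp h2
      · filter_upwards with n
        have hpos : (0:ℝ) < (n:ℝ) + 1 := by positivity
        exact inv_pos.2 hpos
    exact (S.lim_zero p hp).comp h1
  have hL1 := tendsto_setIntegral_Ioc_Ioi _ hg1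
  have hLF := tendsto_setIntegral_Ioc_Ioi _ hF
  have hLβ := tendsto_setIntegral_Ioc_Ioi _ hβint
  have hLU := tendsto_setIntegral_Ioc_Ioi _ hUint
  have hLHS : Tendsto (fun n : ℕ =>
      (∫ x in Ioc ((n:ℝ)+1)⁻¹ ((n:ℝ)+1), p * x ^ (p-1) * (T x * V x))
        + (2 * (∫ x in Ioc ((n:ℝ)+1)⁻¹ ((n:ℝ)+1), x ^ p * F x)
          - ((∫ x in Ioc ((n:ℝ)+1)⁻¹ ((n:ℝ)+1), x ^ p * (β x * V x))
            + lam * ∫ x in Ioc ((n:ℝ)+1)⁻¹ ((n:ℝ)+1), x ^ p * V x))) atTop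
      (nhds ((∫ x in Ioi (0:ℝ), p * x ^ (p-1) * (T x * V x))
        + (2 * (∫ x in Ioi (0:ℝ), x ^ p * F x)
          - ((∫ x in Ioi (0:ℝ), x ^ p * (β x * V x))
            + lam * ∫ x in Ioi (0:ℝ), x ^ p * V x)))) :=
    hL1.add (((hLF.const_mul 2)).sub (hLβ.add (hLU.const_mul lam)))
  have hRHS : Tendsto (fun n : ℕ =>
      ((n:ℝ)+1) ^ p * (T ((n:ℝ)+1) * V ((n:ℝ)+1))
        - (((n:ℝ)+1)⁻¹) ^ p * (T (((n:ℝ)+1)⁻¹) * V (((n:ℝ)+1)⁻¹))) atTop (nhds 0) := by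
    have := hblim.sub halim
    simpa using this
  have heq : (∫ x in Ioi (0:ℝ), p * x ^ (p-1) * (T x * V x))
        + (2 * (∫ x in Ioi (0:ℝ), x ^ p * F x)
          - ((∫ x in Ioi (0:ℝ), x ^ p * (β x * V x))
            + lam * ∫ x in Ioi (0:ℝ), x ^ p * V x)) = 0 := by
    apply tendsto_nhds_unique hLHS
    have : (fun n : ℕ =>
      (∫ x in Ioc ((n:ℝ)+1)⁻¹ ((n:ℝ)+1), p * x ^ (p-1) * (T x * V x))
        + (2 * (∫ x in Ioc ((n:ℝ)+1)⁻¹ ((n:ℝ)+1), x ^ p * F x)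
          - ((∫ x in Ioc ((n:ℝ)+1)⁻¹ ((n:ℝ)+1), x ^ p * (β x * V x))
            + lam * ∫ x in Ioc ((n:ℝ)+1)⁻¹ ((n:ℝ)+1), x ^ p * V x)))
        = (fun n : ℕ => ((n:ℝ)+1) ^ p * (T ((n:ℝ)+1) * V ((n:ℝ)+1))
          - (((n:ℝ)+1)⁻¹) ^ p * (T (((n:ℝ)+1)⁻¹) * V (((n:ℝ)+1)⁻¹))) :=
      funext key
    rw [this]
    exact hRHS
  linarith [heq]

end Master

section SolutionFacts

private lemma rpow_zero_smul_ae (g : ℝ → ℝ) :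
    (fun x => x ^ (0:ℝ) * g x) =ᵐ[volume.restrict (Ioi 0)] g := by
  filter_upwards [ae_restrict_mem measurableSet_Ioi] with x hx
  rw [Real.rpow_zero, one_mul]

private lemma solution_facts (T β : ℝ → ℝ) (κ : ℝ → ℝ → ℝ)
    (hβm : Measurable β) (hβn : ∀ x : ℝ, 0 < x → 0 ≤ β x)
    (hκm : Measurable (Function.uncurry κ)) (hκn : ∀ x y : ℝ, 0 ≤ κ x y)
    (hmass : ∀ y : ℝ, 0 < y → (∫ x in Ioc (0:ℝ) y, κ x y) = 1)
    (hmean : ∀ y : ℝ, 0 < y → (∫ x in Ioc (0:ℝ) y, x * κ x y) = y / 2)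
    (cb : ℝ) (hcbn : 0 ≤ cb)
    (hcb : ∀ y : ℝ, 0 < y → (∫ x in Ioc (0:ℝ) y, (x/y)^2 * κ x y) ≤ cb)
    (lam : ℝ) (V : ℝ → ℝ) (S : EigenSolution T β κ lam V) :
    lam = (∫ x in Ioi (0:ℝ), β x * V x) ∧
    ∀ p : ℝ, 2 ≤ p →
      (∫ x in Ioi (0:ℝ), x ^ p * (β x * V x)) + lam * (∫ x in Ioi (0:ℝ), x ^ p * V x)
        ≤ (∫ x in Ioi (0:ℝ), p * x ^ (p-1) * (T x * V x))
          + 2 * (cb * ∫ x in Ioi (0:ℝ), x ^ p * (β x * V x)) := by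
  -- measurable nonnegative version of V
  have hVasm : AEStronglyMeasurable V (volume.restrict (Ioi 0)) :=
    (S.int_U 0 le_rfl).aestronglyMeasurable.congr (rpow_zero_smul_ae V)
  set V₀ : ℝ → ℝ := hVasm.mk V with hV₀def
  have hV₀m : Measurable V₀ := hVasm.stronglyMeasurable_mk.measurable
  set V' : ℝ → ℝ := fun x => max (V₀ x) 0 with hV'def
  have hV'm : Measurable V' := hV₀m.max measurable_const
  have hV'n : ∀ x, 0 ≤ V' x := fun x => le_max_right _ _
  have hV'ae : V =ᵐ[volume.restrict (Ioi 0)] V' := by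
    filter_upwards [hVasm.ae_eq_mk, ae_restrict_mem measurableSet_Ioi] with x h1 h2
    have h3 : V₀ x = V x := by rw [hV₀def, ← h1]
    rw [hV'def]
    simp only
    rw [h3, max_eq_left (S.U_pos x h2).le]
  -- the lintegral version of the fragmentation integral
  set Ft : ℝ → ENNReal := fun x => ∫⁻ y in Ioi x, ENNReal.ofReal (β y * κ x y * V' y)
    with hFtdef
  have hFtm : Measurable Ft := by
    have hm : Measurable (Function.uncurry fun x y =>
        if x < y then ENNReal.ofReal (β y * κ x y * V' y) else (0:ENNReal)) := by
      apply Measurable.ite (measurableSet_lt measurable_fst measurable_snd)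
      · exact (((hβm.comp measurable_snd).mul hκm).mul (hV'm.comp measurable_snd)).ennreal_ofReal
      · exact measurable_const
    have heq : Ft = fun x => ∫⁻ y,
        (if x < y then ENNReal.ofReal (β y * κ x y * V' y) else (0:ENNReal)) ∂volume := by
      funext x
      rw [hFtdef]
      simp only
      rw [← lintegral_indicator measurableSet_Ioi]
      apply lintegral_congr
      intro y
      simp [Set.indicator_apply, mem_Ioi]
    rw [heq]
    exact hm.lintegral_prod_right
  -- basic integrability facts
  have hβVint : IntegrableOn (fun x => β x * V x) (Ioi 0) volume :=
    (S.int_betaU 0 le_rfl).congr (rpow_zero_smul_ae _)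
  have hβVnn : 0 ≤ᵐ[volume.restrict (Ioi 0)] fun x => β x * V x := by
    filter_upwards [ae_restrict_mem measurableSet_Ioi] with x hx
    exact mul_nonneg (hβn x hx) (S.U_pos x hx).le
  have hβV'ae : (fun x => β x * V x) =ᵐ[volume.restrict (Ioi 0)] fun x => β x * V' x := by
    filter_upwards [hV'ae] with x hx
    rw [hx]
  -- Tonelli + kernel mass: the q = 0 computation
  have hRHS0 : (∫⁻ y in Ioi (0:ℝ), ENNReal.ofReal (β y * V' y)
      * ∫⁻ x in Ioc (0:ℝ) y, ENNReal.ofReal (x ^ (0:ℝ) * κ x y))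
      = ENNReal.ofReal (∫ x in Ioi (0:ℝ), β x * V x) := by
    have h1 : (∫⁻ y in Ioi (0:ℝ), ENNReal.ofReal (β y * V' y)
        * ∫⁻ x in Ioc (0:ℝ) y, ENNReal.ofReal (x ^ (0:ℝ) * κ x y))
        = ∫⁻ y in Ioi (0:ℝ), ENNReal.ofReal (β y * V' y) := by
      apply setLIntegral_congr_fun measurableSet_Ioi
      intro y hy
      dsimp only
      rw [kernel_I0 hκm hκn hmass hy, mul_one]
    rw [h1]
    have h2 : (∫⁻ y in Ioi (0:ℝ), ENNReal.ofReal (β y * V' y))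
        = ∫⁻ y in Ioi (0:ℝ), ENNReal.ofReal (β y * V y) := by
      apply lintegral_congr_ae
      filter_upwards [hβV'ae] with y hy
      rw [hy]
    rw [h2, ← MeasureTheory.ofReal_integral_eq_lintegral_ofReal hβVint hβVnn]
  have hkey0 := tonelli_key hβm hV'm hκm hβn hV'n hκn (le_refl (0:ℝ))
  have hfin0 : (∫⁻ x in Ioi (0:ℝ), ENNReal.ofReal (x ^ (0:ℝ)) * Ft x) < ⊤ := by
    rw [hFtdef]
    simp only
    rw [hkey0, hRHS0]
    exact ENNReal.ofReal_lt_top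
  have hFtfin : ∀ᵐ x ∂(volume.restrict (Ioi 0)), Ft x < ⊤ := by
    have hm : Measurable fun x => ENNReal.ofReal (x ^ (0:ℝ)) * Ft x :=
      (((Real.continuous_rpow_const le_rfl).measurable).ennreal_ofReal).mul hFtm
    have h := ae_lt_top hm hfin0.ne
    filter_upwards [h, ae_restrict_mem measurableSet_Ioi] with x h1 h2
    rw [Real.rpow_zero, ENNReal.ofReal_one, one_mul] at h1
    exact h1
  -- identification of the real fragmentation integral
  have hFeq : ∀ x : ℝ, 0 < x →
      (∫ y in Ioi x, β y * κ x y * V y) = (Ft x).toReal := by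
    intro x hx
    have hae : (fun y => β y * κ x y * V y)
        =ᵐ[volume.restrict (Ioi x)] (fun y => β y * κ x y * V' y) := by
      have h1 := ae_restrict_of_ae_restrict_of_subset (Ioi_subset_Ioi hx.le) hV'ae
      filter_upwards [h1] with y hy
      rw [hy]
    rw [integral_congr_ae hae, integral_eq_lintegral_of_nonneg_ae]
    · filter_upwards [ae_restrict_mem measurableSet_Ioi] with y hy
      exact mul_nonneg (mul_nonneg (hβn y (lt_trans hx hy)) (hκn x y)) (hV'n y)
    · exact (((hβm.mul (kernel_slice_meas' hκm x)).mul hV'm)).aestronglyMeasurable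
  -- integrability and value of ∫ x^q F
  have hFint : ∀ q : ℝ, 0 ≤ q →
      (∫⁻ x in Ioi (0:ℝ), ENNReal.ofReal (x ^ q) * Ft x) < ⊤ →
      IntegrableOn (fun x => x ^ q * (∫ y in Ioi x, β y * κ x y * V y)) (Ioi 0) volume ∧
      (∫ x in Ioi (0:ℝ), x ^ q * (∫ y in Ioi x, β y * κ x y * V y))
        = (∫⁻ x in Ioi (0:ℝ), ENNReal.ofReal (x ^ q) * Ft x).toReal := by
    intro q hq hfin
    set G : ℝ → ℝ := fun x => x ^ q * (Ft x).toReal with hGdef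
    have hGm : Measurable G :=
      ((Real.continuous_rpow_const hq).measurable).mul hFtm.ennreal_toReal
    have hGae : (fun x => x ^ q * (∫ y in Ioi x, β y * κ x y * V y))
        =ᵐ[volume.restrict (Ioi 0)] G := by
      filter_upwards [ae_restrict_mem measurableSet_Ioi] with x hx
      rw [hGdef]
      simp only
      rw [hFeq x hx]
    have hGnn : 0 ≤ᵐ[volume.restrict (Ioi 0)] G := by
      filter_upwards [ae_restrict_mem measurableSet_Ioi] with x hx
      exact mul_nonneg (Real.rpow_nonneg hx.le q) ENNReal.toReal_nonneg
    have hGof : (fun x => ENNReal.ofReal (G x))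
        =ᵐ[volume.restrict (Ioi 0)] fun x => ENNReal.ofReal (x ^ q) * Ft x := by
      filter_upwards [hFtfin, ae_restrict_mem measurableSet_Ioi] with x h1 h2
      rw [hGdef]
      simp only
      rw [ENNReal.ofReal_mul (Real.rpow_nonneg h2.le q), ENNReal.ofReal_toReal h1.ne]
    have hGint : IntegrableOn G (Ioi 0) volume := by
      refine ⟨hGm.aestronglyMeasurable, ?_⟩
      rw [hasFiniteIntegral_iff_ofReal hGnn, lintegral_congr_ae hGof]
      exact hfin
    refine ⟨hGint.congr hGae.symm, ?_⟩
    rw [integral_congr_ae hGae,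
      integral_eq_lintegral_of_nonneg_ae hGnn hGm.aestronglyMeasurable,
      lintegral_congr_ae hGof]
  -- p = 0 : the eigenvalue identity
  constructor
  · have hg1 : IntegrableOn (fun x => (0:ℝ) * x ^ ((0:ℝ)-1) * (T x * V x)) (Ioi 0) volume := by
      have h0 : (fun x => (0:ℝ) * x ^ ((0:ℝ)-1) * (T x * V x)) = fun _ => (0:ℝ) := by
        funext x; ring
      rw [h0]
      exact integrableOn_zero
    have hF0 := hFint 0 le_rfl hfin0
    have hmaster := master_identity T β κ lam V S 0 le_rfl hg1 hF0.1
    have hzero : (∫ x in Ioi (0:ℝ), (0:ℝ) * x ^ ((0:ℝ)-1) * (T x * V x)) = 0 := by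
      have h0 : (fun x => (0:ℝ) * x ^ ((0:ℝ)-1) * (T x * V x)) = fun _ => (0:ℝ) := by
        funext x; ring
      rw [h0, integral_zero]
    have hβ0 : (∫ x in Ioi (0:ℝ), x ^ (0:ℝ) * (β x * V x)) = ∫ x in Ioi (0:ℝ), β x * V x :=
      integral_congr_ae (rpow_zero_smul_ae _)
    have hU0 : (∫ x in Ioi (0:ℝ), x ^ (0:ℝ) * V x) = 1 := by
      rw [integral_congr_ae (rpow_zero_smul_ae V), S.normalized]
    have hFval : (∫ x in Ioi (0:ℝ), x ^ (0:ℝ) * (∫ y in Ioi x, β y * κ x y * V y))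
        = ∫ x in Ioi (0:ℝ), β x * V x := by
      rw [hF0.2]
      have : (∫⁻ x in Ioi (0:ℝ), ENNReal.ofReal (x ^ (0:ℝ)) * Ft x)
          = ENNReal.ofReal (∫ x in Ioi (0:ℝ), β x * V x) := by
        rw [hFtdef]; simp only; rw [hkey0, hRHS0]
      rw [this, ENNReal.toReal_ofReal]
      exact setIntegral_nonneg measurableSet_Ioi fun x hx =>
        mul_nonneg (hβn x hx) (S.U_pos x hx).le
    rw [hβ0, hU0, hzero, hFval, mul_one] at hmaster
    linarith
  -- general p ≥ 2
  · intro p hp2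
    have hp0 : (0:ℝ) ≤ p := by linarith
    have hp1 : (0:ℝ) ≤ p - 1 := by linarith
    have hg1 : IntegrableOn (fun x => p * x ^ (p-1) * (T x * V x)) (Ioi 0) volume := by
      have h1 := (S.int_tauU (p-1) hp1).const_mul p
      apply h1.congr
      filter_upwards with x
      rw [mul_assoc]
    have hkeyp := tonelli_key hβm hV'm hκm hβn hV'n hκn hp0
    set Bp : ℝ := ∫ x in Ioi (0:ℝ), x ^ p * (β x * V x) with hBpdef
    have hBpnn : 0 ≤ Bp :=
      setIntegral_nonneg measurableSet_Ioi fun x hx =>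
        mul_nonneg (Real.rpow_nonneg hx.le p) (mul_nonneg (hβn x hx) (S.U_pos x hx).le)
    have hβVpint : IntegrableOn (fun x => x ^ p * (β x * V x)) (Ioi 0) volume :=
      S.int_betaU p hp0
    have hβVpnn : 0 ≤ᵐ[volume.restrict (Ioi 0)] fun x => cb * (x ^ p * (β x * V x)) := by
      filter_upwards [ae_restrict_mem measurableSet_Ioi] with x hx
      exact mul_nonneg hcbn (mul_nonneg (Real.rpow_nonneg hx.le p)
        (mul_nonneg (hβn x hx) (S.U_pos x hx).le))
    have hRHSp : (∫⁻ y in Ioi (0:ℝ), ENNReal.ofReal (β y * V' y)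
        * ∫⁻ x in Ioc (0:ℝ) y, ENNReal.ofReal (x ^ p * κ x y))
        ≤ ENNReal.ofReal (cb * Bp) := by
      have h1 : (∫⁻ y in Ioi (0:ℝ), ENNReal.ofReal (β y * V' y)
          * ∫⁻ x in Ioc (0:ℝ) y, ENNReal.ofReal (x ^ p * κ x y))
          ≤ ∫⁻ y in Ioi (0:ℝ), ENNReal.ofReal (β y * V' y) * ENNReal.ofReal (cb * y ^ p) := by
        apply lintegral_mono_ae
        filter_upwards [ae_restrict_mem measurableSet_Ioi] with y hy
        exact mul_le_mul_right (kernel_Ip hκm hκn hmean hcbn hcb hp2 hy) _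
      have h2 : (∫⁻ y in Ioi (0:ℝ), ENNReal.ofReal (β y * V' y) * ENNReal.ofReal (cb * y ^ p))
          = ENNReal.ofReal (cb * Bp) := by
        have h3 : (∫⁻ y in Ioi (0:ℝ), ENNReal.ofReal (β y * V' y) * ENNReal.ofReal (cb * y ^ p))
            = ∫⁻ y in Ioi (0:ℝ), ENNReal.ofReal (cb * (y ^ p * (β y * V y))) := by
          apply lintegral_congr_ae
          filter_upwards [hβV'ae, ae_restrict_mem measurableSet_Ioi] with y hy hy'
          rw [← ENNReal.ofReal_mul (mul_nonneg (hβn y hy') (hV'n y))]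
          congr 1
          rw [← hy]
          ring
        rw [h3, ← MeasureTheory.ofReal_integral_eq_lintegral_ofReal
          (hβVpint.const_mul cb) hβVpnn, integral_const_mul]
      exact le_trans h1 (le_of_eq h2)
    have hfinp : (∫⁻ x in Ioi (0:ℝ), ENNReal.ofReal (x ^ p) * Ft x)
        ≤ ENNReal.ofReal (cb * Bp) := by
      rw [hFtdef]
      simp only
      rw [hkeyp]
      exact hRHSp
    have hFp := hFint p hp0 (lt_of_le_of_lt hfinp ENNReal.ofReal_lt_top)
    have hmaster := master_identity T β κ lam V S p hp0 hg1 hFp.1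
    have hFpval : (∫ x in Ioi (0:ℝ), x ^ p * (∫ y in Ioi x, β y * κ x y * V y)) ≤ cb * Bp := by
      rw [hFp.2]
      calc (∫⁻ x in Ioi (0:ℝ), ENNReal.ofReal (x ^ p) * Ft x).toReal
          ≤ (ENNReal.ofReal (cb * Bp)).toReal :=
            ENNReal.toReal_mono ENNReal.ofReal_ne_top hfinp
        _ = cb * Bp := ENNReal.toReal_ofReal (mul_nonneg hcbn hBpnn)
    rw [← hBpdef] at hmaster
    linarith

end SolutionFacts

private lemma final_arith (p α c c' cb C0 C1 dp Bp Mp J lamv : ℝ)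
    (hp : 0 < p) (hα : 0 < α) (hc : 0 < c) (hc' : 0 ≤ c')
    (hcbh : cb < 1/2)
    (hC0 : 0 ≤ C0) (hC1 : 0 ≤ C1) (hdp : 0 < dp)
    (hBp : 0 ≤ Bp) (hMp : 0 ≤ Mp)
    (hIneq : Bp + lamv * Mp ≤ p * α * J + 2 * (cb * Bp))
    (hJle : J ≤ C1 + C0 * Mp)
    (hsplit : lamv ≤ c' + dp⁻¹ * Bp)
    (hα1 : α * (2 * p * (C0 + 1)) ≤ c)
    (hα2 : α * (2 * p * C1 + 1) ≤ (c - c') * (1 - 2*cb) * dp)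
    (hcase : c < lamv) : False := by
  have h12cb : (0:ℝ) < 1 - 2*cb := by linarith
  have hpα : (0:ℝ) ≤ p * α := mul_nonneg hp.le hα.le
  have hlamMp : lamv * Mp ≤ p * α * J := by nlinarith
  have hcMp : c * Mp ≤ p * α * J :=
    le_trans (mul_le_mul_of_nonneg_right hcase.le hMp) hlamMp
  have hJle2 : p * α * J ≤ p * α * C1 + p * α * C0 * Mp := by nlinarith
  have hpαC0 : p * α * C0 ≤ c / 2 := by nlinarith
  have hMple : c * Mp ≤ 2 * (p * α * C1) := by nlinarith
  have hBple : (1 - 2*cb) * Bp ≤ 2 * (p * α * C1) := by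
    have hlamMpnn : 0 ≤ lamv * Mp := mul_nonneg (le_trans hc.le hcase.le) hMp
    nlinarith
  have hBple2 : Bp ≤ (c - c') * dp := by
    have h1 : (1 - 2*cb) * Bp ≤ (1 - 2*cb) * ((c - c') * dp) := by nlinarith
    exact le_of_mul_le_mul_left h1 h12cb
  have hfinal : dp⁻¹ * Bp ≤ c - c' := by
    have h1 := mul_le_mul_of_nonneg_left hBple2 (inv_nonneg.2 hdp.le)
    rwa [show dp⁻¹ * ((c - c') * dp) = (c - c') * (dp⁻¹ * dp) by ring,
      inv_mul_cancel₀ hdp.ne', mul_one] at h1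
  linarith
/-- Polymerization dependency, vanishing growth: if `β` is locally essentially bounded on
`(0,∞)` and `limsup_{x→∞} τ(x)/x < ∞`, then
`limsup_{α→0⁺} λ_α ≤ ess limsup_{x→0⁺} β(x)` (in `[0,+∞]`). -/
theorem polymerization_dependency_vanishing
    (τ β : ℝ → ℝ) (κ : ℝ → ℝ → ℝ)
    (hsa : StandingAssumptions τ β κ)
    (hβloc : ∀ K : Set ℝ, IsCompact K → K ⊆ Ioi 0 →
        ∃ C : ℝ, ∀ᵐ x ∂(volume.restrict K), β x ≤ C)
    (hτ : ∃ C : ℝ, ∀ᶠ x in atTop, τ x ≤ C * x)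
    (lam : ℝ → ℝ) (U : ℝ → ℝ → ℝ)
    (hsol : ∀ α : ℝ, 0 < α → EigenSolution (fun x => α * τ x) β κ (lam α) (U α)) :
    Filter.limsup (fun α => ENNReal.ofReal (lam α)) (nhdsWithin 0 (Ioi 0)) ≤
      Filter.limsup (fun x => ENNReal.ofReal (β x))
        (ae (volume : Measure ℝ) ⊓ nhdsWithin 0 (Ioi 0)) := by

  -- global constants
  obtain ⟨r₀, hr₀, hloc⟩ := hsa.τ_locBdd
  obtain ⟨C0, hC0ev⟩ := hτ
  obtain ⟨X0, hX0⟩ := eventually_atTop.1 hC0ev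
  set X : ℝ := max X0 1 with hXdef
  have hXpos : (0:ℝ) < X := lt_of_lt_of_le one_pos (le_max_right _ _)
  have hX : ∀ x : ℝ, X ≤ x → τ x ≤ C0 * x := fun x hx => hX0 x (le_trans (le_max_left _ _) hx)
  have hC0n : 0 ≤ C0 := by
    have h1 := hsa.τ_nonneg X hXpos
    have h2 := hX X le_rfl
    nlinarith
  obtain ⟨C₂0, hC₂0⟩ := hloc X hXpos
  set C₂ : ℝ := max C₂0 0 with hC₂def
  have hC₂n : (0:ℝ) ≤ C₂ := le_max_right _ _
  have hC₂ : ∀ᵐ x ∂(volume.restrict (Ioc (0:ℝ) X)), x ^ r₀ * τ x ≤ C₂ := by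
    filter_upwards [hC₂0] with x h
    exact le_trans h (le_max_left _ _)
  set p : ℝ := max 2 (r₀ + 1) with hpdef
  have hp2 : (2:ℝ) ≤ p := le_max_left _ _
  have hpr : r₀ + 1 ≤ p := le_max_right _ _
  have hppos : (0:ℝ) < p := by linarith
  set C₁ : ℝ := X ^ (p - 1 - r₀) * C₂ with hC₁def
  have hC₁n : 0 ≤ C₁ := mul_nonneg (Real.rpow_nonneg hXpos.le _) hC₂n
  obtain ⟨cb0, hcb0, hcbb⟩ := hsa.kernel.second
  set cb : ℝ := max cb0 0 with hcbdef
  have hcbn : (0:ℝ) ≤ cb := le_max_right _ _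
  have hcbh : cb < 1/2 := max_lt hcb0 (by norm_num)
  have h12cb : (0:ℝ) < 1 - 2*cb := by linarith
  have hcb : ∀ y : ℝ, 0 < y → (∫ x in Ioc (0:ℝ) y, (x/y)^2 * κ x y) ≤ cb :=
    fun y hy => le_trans (hcbb y hy) (le_max_left _ _)
  -- reduce to an eventual bound
  apply le_of_forall_gt_imp_ge_of_dense
  intro b hb
  rcases eq_or_ne b ⊤ with rfl | hbtop
  · exact le_top
  obtain ⟨b', hLb', hb'b⟩ := exists_between hb
  have hb'top : b' ≠ ⊤ := ne_top_of_lt hb'b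
  have hev : ∀ᶠ x in (ae (volume : Measure ℝ) ⊓ nhdsWithin 0 (Ioi 0)),
      ENNReal.ofReal (β x) < b' := Filter.eventually_lt_of_limsup_lt hLb'
  obtain ⟨A, hA, B, hB, hAB⟩ := Filter.mem_inf_iff.1 hev
  obtain ⟨δ, hδmem, hIoo⟩ := mem_nhdsGT_iff_exists_Ioo_subset.1 hB
  have hδpos : (0:ℝ) < δ := hδmem
  set c' : ℝ := b'.toReal with hc'def
  set c : ℝ := b.toReal with hcdef
  have hbne : b ≠ 0 := by
    intro h
    rw [h] at hb
    exact absurd hb (by simp)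
  have hcpos : 0 < c := ENNReal.toReal_pos hbne hbtop
  have hc'n : (0:ℝ) ≤ c' := ENNReal.toReal_nonneg
  have hc'c : c' < c := by
    rw [hc'def, hcdef]
    exact (ENNReal.toReal_lt_toReal hb'top hbtop).2 hb'b
  have hcc' : (0:ℝ) < c - c' := by linarith
  have hβδ : ∀ᵐ x ∂(volume.restrict (Ioo 0 δ)), β x ≤ c' := by
    rw [ae_restrict_iff' measurableSet_Ioo]
    filter_upwards [hA] with x hxA hxm
    have hx : x ∈ A ∩ B := ⟨hxA, hIoo hxm⟩
    rw [← hAB] at hx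
    have hx' : ENNReal.ofReal (β x) ≤ b' := le_of_lt hx
    rcases le_or_gt (β x) 0 with h | h
    · exact le_trans h hc'n
    · calc β x = (ENNReal.ofReal (β x)).toReal := (ENNReal.toReal_ofReal h.le).symm
        _ ≤ b'.toReal := ENNReal.toReal_mono hb'top hx'
  have hδp : (0:ℝ) < δ ^ p := Real.rpow_pos_of_pos hδpos p
  have hden1 : (0:ℝ) < 2 * p * (C0 + 1) := by nlinarith
  have hden2 : (0:ℝ) < 2 * p * C₁ + 1 := by nlinarith
  set ε : ℝ := min (c / (2 * p * (C0 + 1)))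
    ((c - c') * (1 - 2*cb) * δ ^ p / (2 * p * C₁ + 1)) with hεdef
  have hεpos : 0 < ε :=
    lt_min (div_pos hcpos hden1) (div_pos (mul_pos (mul_pos hcc' h12cb) hδp) hden2)
  -- the eventual bound on the eigenvalues
  have hevlam : ∀ᶠ α in nhdsWithin (0:ℝ) (Ioi 0), ENNReal.ofReal (lam α) ≤ b := by
    have hmem : Ioo (0:ℝ) ε ∈ nhdsWithin (0:ℝ) (Ioi 0) :=
      Ioo_mem_nhdsGT_of_mem ⟨le_rfl, hεpos⟩
    filter_upwards [hmem] with α hα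
    obtain ⟨hα0, hαε⟩ := hα
    have S := hsol α hα0
    obtain ⟨hlam_eq, hIneqf⟩ := solution_facts (fun x => α * τ x) β κ hsa.β_meas hsa.β_nonneg
      hsa.kernel.meas hsa.kernel.nonneg hsa.kernel.mass hsa.kernel.mean cb hcbn hcb
      (lam α) (U α) S
    have hIneq := hIneqf p hp2
    set Bp : ℝ := ∫ x in Ioi (0:ℝ), x ^ p * (β x * U α x) with hBpdef
    set Mp : ℝ := ∫ x in Ioi (0:ℝ), x ^ p * U α x with hMpdef
    set J : ℝ := ∫ x in Ioi (0:ℝ), x ^ (p-1) * (τ x * U α x) with hJdef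
    -- basic nonnegativity
    have hBpnn : 0 ≤ Bp := setIntegral_nonneg measurableSet_Ioi fun x hx =>
      mul_nonneg (Real.rpow_nonneg (le_of_lt hx) p)
        (mul_nonneg (hsa.β_nonneg x hx) (S.U_pos x hx).le)
    have hMpnn : 0 ≤ Mp := setIntegral_nonneg measurableSet_Ioi fun x hx =>
      mul_nonneg (Real.rpow_nonneg (le_of_lt hx) p) (S.U_pos x hx).le
    -- integrability of the τ-weighted integrand (without the α factor)
    have hτUint : IntegrableOn (fun x => x ^ (p-1) * (τ x * U α x)) (Ioi 0) volume := by
      have h1 := (S.int_tauU (p-1) (by linarith)).const_mul α⁻¹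
      apply h1.congr
      filter_upwards with x
      show α⁻¹ * (x ^ (p-1) * (α * τ x * U α x)) = x ^ (p-1) * (τ x * U α x)
      field_simp
    have hUint : IntegrableOn (U α) (Ioi 0) volume :=
      (S.int_U 0 le_rfl).congr (rpow_zero_smul_ae _)
    have hUnn : 0 ≤ᵐ[volume.restrict (Ioi 0)] U α := by
      filter_upwards [ae_restrict_mem measurableSet_Ioi] with x hx
      exact (S.U_pos x hx).le
    have hUle1 : ∀ s : Set ℝ, s ⊆ Ioi 0 → (∫ x in s, U α x) ≤ 1 := by
      intro s hs
      rw [← S.normalized]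
      exact setIntegral_mono_set hUint hUnn (HasSubset.Subset.eventuallyLE hs)
    -- rewrite the τ term of the master inequality
    have hJeq : (∫ x in Ioi (0:ℝ), p * x ^ (p-1) * (α * τ x * U α x)) = p * α * J := by
      rw [hJdef, ← integral_const_mul]
      apply integral_congr_ae
      filter_upwards with x
      ring
    -- bound J
    have hsub1 : Ioc (0:ℝ) X ⊆ Ioi 0 := fun x hx => hx.1
    have hsub2 : Ioi X ⊆ Ioi (0:ℝ) := Ioi_subset_Ioi hXpos.le
    have hJsplit : J = (∫ x in Ioc (0:ℝ) X, x ^ (p-1) * (τ x * U α x))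
        + ∫ x in Ioi X, x ^ (p-1) * (τ x * U α x) := by
      rw [hJdef, ← Ioc_union_Ioi_eq_Ioi hXpos.le]
      exact setIntegral_union (Set.Ioc_disjoint_Ioi le_rfl) measurableSet_Ioi
        (hτUint.mono_set hsub1) (hτUint.mono_set hsub2)
    have hpiece1 : (∫ x in Ioc (0:ℝ) X, x ^ (p-1) * (τ x * U α x)) ≤ C₁ := by
      have h1 : (∫ x in Ioc (0:ℝ) X, x ^ (p-1) * (τ x * U α x))
          ≤ ∫ x in Ioc (0:ℝ) X, C₁ * U α x := by
        apply integral_mono_ae (hτUint.mono_set hsub1) ((hUint.mono_set hsub1).const_mul C₁)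
        filter_upwards [hC₂, ae_restrict_mem measurableSet_Ioc] with x hxb hx
        have hx1 : (0:ℝ) < x := hx.1
        have h2 : x ^ (p-1) = x ^ (p-1-r₀) * x ^ r₀ := by
          rw [← Real.rpow_add hx1]
          ring_nf
        have h3 : x ^ (p-1-r₀) ≤ X ^ (p-1-r₀) :=
          Real.rpow_le_rpow hx1.le hx.2 (by linarith)
        have h4 : (0:ℝ) ≤ x ^ (p-1-r₀) := Real.rpow_nonneg hx1.le _
        have h5 : (0:ℝ) ≤ x ^ r₀ * τ x :=
          mul_nonneg (Real.rpow_nonneg hx1.le _) (hsa.τ_nonneg x hx1)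
        have h6 : (0:ℝ) ≤ X ^ (p-1-r₀) := Real.rpow_nonneg hXpos.le _
        have hU : (0:ℝ) ≤ U α x := (S.U_pos x hx1).le
        calc x ^ (p-1) * (τ x * U α x) = (x ^ (p-1-r₀) * (x ^ r₀ * τ x)) * U α x := by
              rw [h2]; ring
          _ ≤ (X ^ (p-1-r₀) * C₂) * U α x := by
              apply mul_le_mul_of_nonneg_right _ hU
              exact mul_le_mul h3 hxb h5 h6
          _ = C₁ * U α x := by rw [hC₁def]
      rw [integral_const_mul] at h1
      calc (∫ x in Ioc (0:ℝ) X, x ^ (p-1) * (τ x * U α x))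
          ≤ C₁ * ∫ x in Ioc (0:ℝ) X, U α x := h1
        _ ≤ C₁ * 1 := mul_le_mul_of_nonneg_left (hUle1 _ hsub1) hC₁n
        _ = C₁ := mul_one _
    have hpiece2 : (∫ x in Ioi X, x ^ (p-1) * (τ x * U α x)) ≤ C0 * Mp := by
      have h1 : (∫ x in Ioi X, x ^ (p-1) * (τ x * U α x))
          ≤ ∫ x in Ioi X, C0 * (x ^ p * U α x) := by
        apply integral_mono_ae (hτUint.mono_set hsub2)
          (((S.int_U p (by linarith)).mono_set hsub2).const_mul C0)
        filter_upwards [ae_restrict_mem measurableSet_Ioi] with x hx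
        have hxpos : (0:ℝ) < x := lt_trans hXpos hx
        have hU : (0:ℝ) ≤ U α x := (S.U_pos x hxpos).le
        have h2 : x ^ (p-1) * x = x ^ p := by
          nth_rewrite 2 [← Real.rpow_one x]
          rw [← Real.rpow_add hxpos]
          ring_nf
        calc x ^ (p-1) * (τ x * U α x) ≤ x ^ (p-1) * (C0 * x * U α x) := by
              apply mul_le_mul_of_nonneg_left _ (Real.rpow_nonneg hxpos.le _)
              exact mul_le_mul_of_nonneg_right (hX x hx.le) hU
          _ = C0 * ((x ^ (p-1) * x) * U α x) := by ring
          _ = C0 * (x ^ p * U α x) := by rw [h2]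
      rw [integral_const_mul] at h1
      refine le_trans h1 (mul_le_mul_of_nonneg_left ?_ hC0n)
      rw [hMpdef]
      apply setIntegral_mono_set (S.int_U p (by linarith)) _
        (HasSubset.Subset.eventuallyLE hsub2)
      filter_upwards [ae_restrict_mem measurableSet_Ioi] with x hx
      exact mul_nonneg (Real.rpow_nonneg (le_of_lt hx) p) (S.U_pos x hx).le
    have hJle : J ≤ C₁ + C0 * Mp := by
      rw [hJsplit]
      exact add_le_add hpiece1 hpiece2
    -- the splitting of the eigenvalue integral
    have hβUint : IntegrableOn (fun x => β x * U α x) (Ioi 0) volume :=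
      (S.int_betaU 0 le_rfl).congr (rpow_zero_smul_ae _)
    have hsubo : Ioo (0:ℝ) δ ⊆ Ioi 0 := fun x hx => hx.1
    have hsubi : Ici δ ⊆ Ioi (0:ℝ) := fun x hx => lt_of_lt_of_le hδpos hx
    have hlam_split : lam α ≤ c' + (δ ^ p)⁻¹ * Bp := by
      rw [hlam_eq]
      have hdisj : Disjoint (Ioo (0:ℝ) δ) (Ici δ) := by
        rw [Set.disjoint_left]
        intro x hx hx'
        exact absurd hx.2 (not_lt.2 hx')
      have hunion : (∫ x in Ioi (0:ℝ), β x * U α x)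
          = (∫ x in Ioo (0:ℝ) δ, β x * U α x) + ∫ x in Ici δ, β x * U α x := by
        rw [← Ioo_union_Ici_eq_Ioi hδpos]
        exact setIntegral_union hdisj measurableSet_Ici
          (hβUint.mono_set hsubo) (hβUint.mono_set hsubi)
      have hpc1 : (∫ x in Ioo (0:ℝ) δ, β x * U α x) ≤ c' := by
        have h1 : (∫ x in Ioo (0:ℝ) δ, β x * U α x) ≤ ∫ x in Ioo (0:ℝ) δ, c' * U α x := by
          apply integral_mono_ae (hβUint.mono_set hsubo)
            ((hUint.mono_set hsubo).const_mul c')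
          filter_upwards [hβδ, ae_restrict_mem measurableSet_Ioo] with x h1 h2
          exact mul_le_mul_of_nonneg_right h1 (S.U_pos x h2.1).le
        rw [integral_const_mul] at h1
        calc (∫ x in Ioo (0:ℝ) δ, β x * U α x) ≤ c' * ∫ x in Ioo (0:ℝ) δ, U α x := h1
          _ ≤ c' * 1 := mul_le_mul_of_nonneg_left (hUle1 _ hsubo) hc'n
          _ = c' := mul_one _
      have hpc2 : (∫ x in Ici δ, β x * U α x) ≤ (δ ^ p)⁻¹ * Bp := by
        have h1 : (∫ x in Ici δ, β x * U α x)
            ≤ ∫ x in Ici δ, (δ ^ p)⁻¹ * (x ^ p * (β x * U α x)) := by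
          apply integral_mono_ae (hβUint.mono_set hsubi)
            (((S.int_betaU p (by linarith)).mono_set hsubi).const_mul _)
          filter_upwards [ae_restrict_mem measurableSet_Ici] with x hx
          have hxpos : (0:ℝ) < x := lt_of_lt_of_le hδpos hx
          have hβU : (0:ℝ) ≤ β x * U α x :=
            mul_nonneg (hsa.β_nonneg x hxpos) (S.U_pos x hxpos).le
          have h2 : δ ^ p ≤ x ^ p := Real.rpow_le_rpow hδpos.le hx hppos.le
          have h3 : (1:ℝ) ≤ (δ ^ p)⁻¹ * x ^ p := by
            rw [← inv_mul_cancel₀ hδp.ne']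
            exact mul_le_mul_of_nonneg_left h2 (inv_nonneg.2 hδp.le)
          calc β x * U α x = 1 * (β x * U α x) := (one_mul _).symm
            _ ≤ ((δ ^ p)⁻¹ * x ^ p) * (β x * U α x) := mul_le_mul_of_nonneg_right h3 hβU
            _ = (δ ^ p)⁻¹ * (x ^ p * (β x * U α x)) := by ring
        rw [integral_const_mul] at h1
        refine le_trans h1 (mul_le_mul_of_nonneg_left ?_ (inv_nonneg.2 hδp.le))
        rw [hBpdef]
        apply setIntegral_mono_set (S.int_betaU p (by linarith)) _
          (HasSubset.Subset.eventuallyLE hsubi)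
        filter_upwards [ae_restrict_mem measurableSet_Ioi] with x hx
        exact mul_nonneg (Real.rpow_nonneg (le_of_lt hx) p)
          (mul_nonneg (hsa.β_nonneg x hx) (S.U_pos x hx).le)
      rw [hunion]
      exact add_le_add hpc1 hpc2
    -- final arithmetic
    suffices hfin : lam α ≤ c by
      calc ENNReal.ofReal (lam α) ≤ ENNReal.ofReal c := ENNReal.ofReal_le_ofReal hfin
        _ = b := ENNReal.ofReal_toReal hbtop
    by_cases hcase : lam α ≤ c
    · exact hcase
    push_neg at hcase
    exfalso
    rw [hJeq] at hIneq
    -- hIneq : Bp + lam α * Mp ≤ p * α * J + 2 * (cb * Bp)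
    have hα1 : α * (2 * p * (C0 + 1)) ≤ c := by
      have h1 : α ≤ c / (2 * p * (C0 + 1)) := le_trans hαε.le (min_le_left _ _)
      rwa [le_div_iff₀ hden1] at h1
    have hα2 : α * (2 * p * C₁ + 1) ≤ (c - c') * (1 - 2*cb) * δ ^ p := by
      have h1 : α ≤ (c - c') * (1 - 2*cb) * δ ^ p / (2 * p * C₁ + 1) :=
        le_trans hαε.le (min_le_right _ _)
      rwa [le_div_iff₀ hden2] at h1
    exact final_arith p α c c' cb C0 C₁ (δ ^ p) Bp Mp J (lam α) hppos hα0 hcpos hc'n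
      hcbh hC0n hC₁n hδp hBpnn hMpnn hIneq hJle hlam_split hα1 hα2 hcase
  -- conclude
  calc Filter.limsup (fun α => ENNReal.ofReal (lam α)) (nhdsWithin 0 (Ioi 0))
      ≤ Filter.limsup (fun _ => b) (nhdsWithin (0:ℝ) (Ioi 0)) :=
        Filter.limsup_le_limsup hevlam
    _ = b := Filter.limsup_const b
end

section
/- (Polymerization dependency, exploding growth.) Assume the standing assumptions and that 1/τ is integrable on (0,a) for some a > 0. For each α > 0 let (λ_α, U_α) be a solution of the eigenproblem for (ατ, β, κ). Then liminf_{α→+∞} λ_α ≥ liminf_{x→+∞} β(x) (essential liminf, valued in [0,+∞]). -/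
open MeasureTheory Filter Set Topology

/-- Key identities for an eigensolution: `lam = ∫ β U` and the pointwise
bound `α τ(x) U(x) ≤ 2 lam`. -/
lemma eigen_key {τ β : ℝ → ℝ} {κ : ℝ → ℝ → ℝ}
    (hsa : StandingAssumptions τ β κ) {α lam : ℝ} (hα : 0 < α) {Uf : ℝ → ℝ}
    (sol : EigenSolution (fun x => α * τ x) β κ lam Uf) :
    lam = (∫ x in Ioi (0:ℝ), β x * Uf x) ∧
      ∀ x : ℝ, 0 < x → α * τ x * Uf x ≤ 2 * lam := by
  have hUint : IntegrableOn Uf (Ioi (0:ℝ)) volume := by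
    simpa using sol.int_U 0 le_rfl
  have hβUint : IntegrableOn (fun x => β x * Uf x) (Ioi (0:ℝ)) volume := by
    simpa using sol.int_betaU 0 le_rfl
  have hUae : AEMeasurable Uf (volume.restrict (Ioi (0:ℝ))) := hUint.aemeasurable
  set g : ℝ → ℝ := hUae.mk Uf with hgdef
  have hg_meas : Measurable g := hUae.measurable_mk
  have hg_ae : Uf =ᵐ[volume.restrict (Ioi (0:ℝ))] g := hUae.ae_eq_mk
  set φ : ℝ × ℝ → ENNReal := fun p =>
    if p.1 < p.2 then ENNReal.ofReal (β p.2 * κ p.1 p.2 * g p.2) else 0 with hφdef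
  have hκy_meas : ∀ y : ℝ, Measurable fun x => κ x y := by
    intro y
    exact hsa.kernel.meas.comp (measurable_id.prodMk measurable_const)
  have hφ_meas : Measurable φ := by
    apply Measurable.ite
    · exact measurableSet_lt measurable_fst measurable_snd
    · apply ENNReal.measurable_ofReal.comp
      exact ((hsa.β_meas.comp measurable_snd).mul hsa.kernel.meas).mul
        (hg_meas.comp measurable_snd)
    · exact measurable_const
  have hswap : (∫⁻ x in Ioi (0:ℝ), ∫⁻ y in Ioi (0:ℝ), φ (x, y)) =
      ∫⁻ y in Ioi (0:ℝ), ∫⁻ x in Ioi (0:ℝ), φ (x, y) :=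
    lintegral_lintegral_swap hφ_meas.aemeasurable
  set Λ : ℝ := ∫ x in Ioi (0:ℝ), β x * Uf x with hΛdef
  have hΛ_nonneg : 0 ≤ Λ := by
    apply setIntegral_nonneg measurableSet_Ioi
    intro x hx
    exact mul_nonneg (hsa.β_nonneg x hx) (sol.U_pos x hx).le
  have hβU_nonneg : 0 ≤ᵐ[volume.restrict (Ioi (0:ℝ))] fun x => β x * Uf x := by
    filter_upwards [ae_restrict_mem measurableSet_Ioi] with x hx
    exact mul_nonneg (hsa.β_nonneg x hx) (sol.U_pos x hx).le
  -- evaluate the `y`-outer side using the kernel mass identity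
  have hR : (∫⁻ y in Ioi (0:ℝ), ∫⁻ x in Ioi (0:ℝ), φ (x, y)) = ENNReal.ofReal Λ := by
    have hb : ∀ᵐ y ∂(volume.restrict (Ioi (0:ℝ))),
        (∫⁻ x in Ioi (0:ℝ), φ (x, y)) = ENNReal.ofReal (β y * Uf y) := by
      filter_upwards [hg_ae, ae_restrict_mem measurableSet_Ioi] with y hgy hy
      have hy0 : (0:ℝ) < y := hy
      have hκint : IntegrableOn (fun x => κ x y) (Ioc (0:ℝ) y) volume := by
        by_contra h
        have hm := hsa.kernel.mass y hy0
        rw [integral_undef h] at hm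
        exact one_ne_zero hm.symm
      have hκ1 : (∫⁻ x in Ioc (0:ℝ) y, ENNReal.ofReal (κ x y)) = 1 := by
        rw [← ofReal_integral_eq_lintegral_ofReal hκint
          (Eventually.of_forall fun x => hsa.kernel.nonneg x y)]
        rw [hsa.kernel.mass y hy0, ENNReal.ofReal_one]
      have hnn : 0 ≤ β y * Uf y := mul_nonneg (hsa.β_nonneg y hy0) (sol.U_pos y hy0).le
      calc (∫⁻ x in Ioi (0:ℝ), φ (x, y))
          = ∫⁻ x in Ioi (0:ℝ), (Ioo (0:ℝ) y).indicator
              (fun x => ENNReal.ofReal (β y * Uf y) * ENNReal.ofReal (κ x y)) x := by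
            apply setLIntegral_congr_fun measurableSet_Ioi
            intro x hx
            by_cases h : x < y
            · have hmem : x ∈ Ioo (0:ℝ) y := ⟨hx, h⟩
              rw [indicator_of_mem hmem, hφdef]
              simp only [if_pos h]
              rw [← hgy, ← ENNReal.ofReal_mul hnn]
              ring_nf
            · have hmem : x ∉ Ioo (0:ℝ) y := fun hc => h hc.2
              rw [indicator_of_notMem hmem, hφdef]
              simp only [if_neg h]
        _ = ∫⁻ x in Ioo (0:ℝ) y,
              ENNReal.ofReal (β y * Uf y) * ENNReal.ofReal (κ x y) := by
            rw [lintegral_indicator measurableSet_Ioo,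
              Measure.restrict_restrict measurableSet_Ioo,
              inter_eq_self_of_subset_left Ioo_subset_Ioi_self]
        _ = ENNReal.ofReal (β y * Uf y) * ∫⁻ x in Ioo (0:ℝ) y, ENNReal.ofReal (κ x y) := by
            rw [lintegral_const_mul _ (hκy_meas y).ennreal_ofReal]
        _ = ENNReal.ofReal (β y * Uf y) * ∫⁻ x in Ioc (0:ℝ) y, ENNReal.ofReal (κ x y) := by
            rw [Measure.restrict_congr_set Ioo_ae_eq_Ioc]
        _ = ENNReal.ofReal (β y * Uf y) := by rw [hκ1, mul_one]
    rw [lintegral_congr_ae hb, ← ofReal_integral_eq_lintegral_ofReal hβUint hβU_nonneg]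
  have hI_meas : Measurable fun x => ∫⁻ y in Ioi (0:ℝ), φ (x, y) :=
    hφ_meas.lintegral_prod_right'
  have hLHS : (∫⁻ x in Ioi (0:ℝ), ∫⁻ y in Ioi (0:ℝ), φ (x, y)) = ENNReal.ofReal Λ :=
    hswap.trans hR
  have hIfin : ∀ᵐ x ∂(volume.restrict (Ioi (0:ℝ))),
      (∫⁻ y in Ioi (0:ℝ), φ (x, y)) < ⊤ :=
    ae_lt_top hI_meas (by rw [hLHS]; exact ENNReal.ofReal_ne_top)
  set G : ℝ → ℝ := fun x => ∫ y in Ioi x, β y * κ x y * Uf y with hGdef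
  have hInner : ∀ x : ℝ, 0 < x → (∫⁻ y in Ioi (0:ℝ), φ (x, y)) =
      ∫⁻ y in Ioi x, ENNReal.ofReal (β y * κ x y * g y) := by
    intro x hx
    have : (fun y => φ (x, y)) =
        (Ioi x).indicator fun y => ENNReal.ofReal (β y * κ x y * g y) := by
      funext y
      by_cases h : x < y
      · rw [indicator_of_mem (mem_Ioi.mpr h)]; simp only [hφdef, if_pos h]
      · rw [indicator_of_notMem (by simpa using h)]; simp only [hφdef, if_neg h]
    rw [this, lintegral_indicator measurableSet_Ioi,
      Measure.restrict_restrict measurableSet_Ioi,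
      inter_eq_self_of_subset_left (Ioi_subset_Ioi hx.le)]
  have hG_key : ∀ᵐ x ∂(volume.restrict (Ioi (0:ℝ))),
      G x = (∫⁻ y in Ioi (0:ℝ), φ (x, y)).toReal ∧ 0 ≤ G x := by
    filter_upwards [hIfin, ae_restrict_mem measurableSet_Ioi] with x hfin hx
    have hx0 : (0:ℝ) < x := hx
    have haeq : (fun y => β y * κ x y * Uf y)
        =ᵐ[volume.restrict (Ioi x)] fun y => β y * κ x y * g y := by
      have := ae_restrict_of_ae_restrict_of_subset (Ioi_subset_Ioi hx0.le) hg_ae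
      filter_upwards [this] with y hy
      rw [hy]
    have hnn : 0 ≤ᵐ[volume.restrict (Ioi x)] fun y => β y * κ x y * Uf y := by
      filter_upwards [ae_restrict_mem measurableSet_Ioi] with y hy
      have hy0 : (0:ℝ) < y := lt_trans hx0 hy
      exact mul_nonneg (mul_nonneg (hsa.β_nonneg y hy0) (hsa.kernel.nonneg x y))
        (sol.U_pos y hy0).le
    have hlin : (∫⁻ y in Ioi (0:ℝ), φ (x, y)) =
        ∫⁻ y in Ioi x, ENNReal.ofReal (β y * κ x y * Uf y) := by
      rw [hInner x hx0]
      exact lintegral_congr_ae (haeq.mono fun y hy => by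
        dsimp only at hy ⊢; rw [hy])
    have hmg : AEStronglyMeasurable (fun y => β y * κ x y * Uf y)
        (volume.restrict (Ioi x)) := by
      apply AEStronglyMeasurable.congr _ haeq.symm
      have hκx : Measurable fun y => κ x y :=
        hsa.kernel.meas.comp (measurable_const.prodMk measurable_id)
      exact ((hsa.β_meas.mul hκx).mul hg_meas).aestronglyMeasurable
    constructor
    · rw [hGdef]
      simp only
      rw [integral_eq_lintegral_of_nonneg_ae hnn hmg, hlin]
    · rw [hGdef]
      simp only
      exact setIntegral_nonneg measurableSet_Ioi fun y hy =>
        mul_nonneg (mul_nonneg (hsa.β_nonneg y (lt_trans hx0 hy)) (hsa.kernel.nonneg x y))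
          (sol.U_pos y (lt_trans hx0 hy)).le
  have hG_nonneg : 0 ≤ᵐ[volume.restrict (Ioi (0:ℝ))] G :=
    hG_key.mono fun x hx => hx.2
  have hG_asm : AEStronglyMeasurable G (volume.restrict (Ioi (0:ℝ))) :=
    (hI_meas.ennreal_toReal.aestronglyMeasurable).congr
      (hG_key.mono fun x hx => hx.1.symm)
  have hofReal_G : (fun x => ENNReal.ofReal (G x))
      =ᵐ[volume.restrict (Ioi (0:ℝ))] fun x => ∫⁻ y in Ioi (0:ℝ), φ (x, y) := by
    filter_upwards [hG_key, hIfin] with x hx hfin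
    rw [hx.1, ENNReal.ofReal_toReal hfin.ne]
  have hG_int : IntegrableOn G (Ioi (0:ℝ)) volume := by
    refine ⟨hG_asm, ?_⟩
    rw [hasFiniteIntegral_iff_norm]
    have : (∫⁻ x in Ioi (0:ℝ), ENNReal.ofReal ‖G x‖) = ENNReal.ofReal Λ := by
      rw [← hLHS]
      apply lintegral_congr_ae
      filter_upwards [hG_key, hofReal_G] with x hx h2
      rw [Real.norm_of_nonneg hx.2, h2]
    rw [this]
    exact ENNReal.ofReal_lt_top
  have hG_eq : (∫ x in Ioi (0:ℝ), G x) = Λ := by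
    rw [integral_eq_lintegral_of_nonneg_ae hG_nonneg hG_asm,
      lintegral_congr_ae hofReal_G, hLHS, ENNReal.toReal_ofReal hΛ_nonneg]
  -- the integrand of the eigen-equation
  have hβlamU_int : IntegrableOn (fun x => (β x + lam) * Uf x) (Ioi (0:ℝ)) volume := by
    have h : (fun x => (β x + lam) * Uf x) =
        fun x => β x * Uf x + lam * Uf x := funext fun x => by ring
    rw [h]
    exact hβUint.add (hUint.const_mul lam)
  have hD_int : IntegrableOn (fun x => 2 * G x - (β x + lam) * Uf x) (Ioi (0:ℝ)) volume :=
    (hG_int.const_mul 2).sub hβlamU_int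
  have hFTC : ∀ s t : ℝ, 0 < s → s ≤ t →
      (∫ x in Ioc s t, (2 * G x - (β x + lam) * Uf x)) =
        α * τ t * Uf t - α * τ s * Uf s := by
    intro s t hs hst
    have h1 : ∀ x ∈ uIcc s t, HasDerivAt (fun y => α * τ y * Uf y)
        (2 * G x - (β x + lam) * Uf x) x := by
      intro x hx
      rw [uIcc_of_le hst] at hx
      have hx0 : 0 < x := lt_of_lt_of_le hs hx.1
      have := sol.eqn x hx0
      simp only [hGdef]
      exact this
    have h2 : IntervalIntegrable (fun x => 2 * G x - (β x + lam) * Uf x) volume s t := by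
      apply IntegrableOn.intervalIntegrable
      apply hD_int.mono_set
      rw [uIcc_of_le hst]
      exact fun x hx => lt_of_lt_of_le hs hx.1
    have h3 := intervalIntegral.integral_eq_sub_of_hasDerivAt h1 h2
    rw [intervalIntegral.integral_of_le hst] at h3
    exact h3
  have hlim0 : Tendsto (fun x => α * τ x * Uf x) (nhdsWithin 0 (Ioi 0)) (nhds 0) := by
    simpa using sol.lim_zero 0 le_rfl
  have hlimtop : Tendsto (fun x => α * τ x * Uf x) atTop (nhds 0) := by
    simpa using sol.lim_top 0 le_rfl
  -- ∫_{(0,∞)} D = 0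
  have hD_zero : (∫ x in Ioi (0:ℝ), (2 * G x - (β x + lam) * Uf x)) = 0 := by
    set S : ℕ → Set ℝ := fun n => Ioc (1/((n:ℝ)+1)) ((n:ℝ)+1) with hSdef
    have hSmono : Monotone S := by
      intro n m hnm
      apply Ioc_subset_Ioc
      · apply one_div_le_one_div_of_le (by positivity)
        exact_mod_cast add_le_add_left (Nat.cast_le.mpr hnm) 1
      · exact_mod_cast add_le_add_left (Nat.cast_le.mpr hnm) 1
    have hSunion : (⋃ n, S n) = Ioi (0:ℝ) := by
      ext x
      simp only [hSdef, mem_iUnion, mem_Ioc, mem_Ioi]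
      constructor
      · rintro ⟨n, h1, _⟩
        exact lt_trans (by positivity) h1
      · intro hx
        obtain ⟨n, hn⟩ := exists_nat_ge (max (1/x) x)
        refine ⟨n, ?_, ?_⟩
        · rw [div_lt_iff₀ (by positivity)]
          have h1 : 1/x ≤ (n:ℝ) := le_trans (le_max_left _ _) hn
          rw [div_le_iff₀ hx] at h1
          nlinarith
        · exact le_trans (le_trans (le_max_right _ _) hn) (by linarith)
    have ht1 := tendsto_setIntegral_of_monotone (fun n => measurableSet_Ioc) hSmono
      (hSunion ▸ hD_int)
    rw [hSunion] at ht1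
    have heq : ∀ n : ℕ, (∫ x in S n, (2 * G x - (β x + lam) * Uf x)) =
        α * τ ((n:ℝ)+1) * Uf ((n:ℝ)+1) -
          α * τ (1/((n:ℝ)+1)) * Uf (1/((n:ℝ)+1)) := by
      intro n
      apply hFTC _ _ (by positivity)
      calc 1/((n:ℝ)+1) ≤ 1 := by
            rw [div_le_one (by positivity)]; linarith [Nat.cast_nonneg (α := ℝ) n]
        _ ≤ (n:ℝ)+1 := by linarith [Nat.cast_nonneg (α := ℝ) n]
    have h1n : Tendsto (fun n : ℕ => 1/((n:ℝ)+1)) atTop (nhdsWithin 0 (Ioi 0)) := by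
      rw [tendsto_nhdsWithin_iff]
      constructor
      · exact tendsto_one_div_add_atTop_nhds_zero_nat
      · exact Eventually.of_forall fun n => mem_Ioi.mpr (by positivity)
    have hn1 : Tendsto (fun n : ℕ => (n:ℝ)+1) atTop atTop :=
      tendsto_atTop_add_const_right _ _ tendsto_natCast_atTop_atTop
    have ht2 : Tendsto (fun n : ℕ => ∫ x in S n, (2 * G x - (β x + lam) * Uf x))
        atTop (nhds 0) := by
      have := (hlimtop.comp hn1).sub (hlim0.comp h1n)
      rw [sub_zero] at this
      simpa only [heq, Function.comp_apply] using this
    exact tendsto_nhds_unique ht1 ht2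
  -- value of ∫ D
  have hDval : (∫ x in Ioi (0:ℝ), (2 * G x - (β x + lam) * Uf x)) = Λ - lam := by
    rw [integral_sub (hG_int.const_mul 2) hβlamU_int]
    rw [integral_const_mul, hG_eq]
    have h : (fun x => (β x + lam) * Uf x) =
        fun x => β x * Uf x + lam * Uf x := funext fun x => by ring
    rw [h, integral_add hβUint (hUint.const_mul lam), integral_const_mul,
      sol.normalized, ← hΛdef]
    ring
  have hlamΛ : lam = Λ := by
    have := hD_zero.symm.trans hDval
    linarith
  refine ⟨hlamΛ, ?_⟩
  -- pointwise bound
  intro x hx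
  have hFx : α * τ x * Uf x = ∫ t in Ioc (0:ℝ) x, (2 * G t - (β t + lam) * Uf t) := by
    set S : ℕ → Set ℝ := fun n => Ioc (x/((n:ℝ)+2)) x with hSdef
    have hSmono : Monotone S := by
      intro n m hnm
      apply Ioc_subset_Ioc_left
      apply div_le_div_of_nonneg_left hx.le (by positivity)
      exact_mod_cast add_le_add_left (Nat.cast_le.mpr hnm) 2
    have hSunion : (⋃ n, S n) = Ioc (0:ℝ) x := by
      ext t
      simp only [hSdef, mem_iUnion, mem_Ioc]
      constructor
      · rintro ⟨n, h1, h2⟩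
        exact ⟨lt_trans (by positivity) h1, h2⟩
      · rintro ⟨ht0, htx⟩
        obtain ⟨n, hn⟩ := exists_nat_ge (x/t)
        refine ⟨n, ?_, htx⟩
        rw [div_lt_iff₀ (by positivity)]
        have h1 : x/t ≤ (n:ℝ) := hn
        rw [div_le_iff₀ ht0] at h1
        nlinarith
    have hDx_int : IntegrableOn (fun t => 2 * G t - (β t + lam) * Uf t) (Ioc (0:ℝ) x)
        volume := hD_int.mono_set (fun t ht => ht.1)
    have ht1 := tendsto_setIntegral_of_monotone (fun n => measurableSet_Ioc) hSmono
      (hSunion ▸ hDx_int)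
    rw [hSunion] at ht1
    have heq : ∀ n : ℕ, (∫ t in S n, (2 * G t - (β t + lam) * Uf t)) =
        α * τ x * Uf x - α * τ (x/((n:ℝ)+2)) * Uf (x/((n:ℝ)+2)) := by
      intro n
      apply hFTC _ _ (by positivity)
      rw [div_le_iff₀ (by positivity)]
      nlinarith [Nat.cast_nonneg (α := ℝ) n]
    have hsn : Tendsto (fun n : ℕ => x/((n:ℝ)+2)) atTop (nhdsWithin 0 (Ioi 0)) := by
      rw [tendsto_nhdsWithin_iff]
      constructor
      · apply Tendsto.div_atTop (tendsto_const_nhds)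
        exact tendsto_atTop_add_const_right _ _ tendsto_natCast_atTop_atTop
      · exact Eventually.of_forall fun n => mem_Ioi.mpr (by positivity)
    have ht2 : Tendsto (fun n : ℕ => ∫ t in S n, (2 * G t - (β t + lam) * Uf t))
        atTop (nhds (α * τ x * Uf x)) := by
      have := (tendsto_const_nhds (x := α * τ x * Uf x) (f := atTop (α := ℕ))).sub
        (hlim0.comp hsn)
      rw [sub_zero] at this
      simpa only [heq, Function.comp_apply] using this
    exact (tendsto_nhds_unique ht2 ht1)
  rw [hlamΛ, hFx]
  calc (∫ t in Ioc (0:ℝ) x, (2 * G t - (β t + lam) * Uf t))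
      ≤ ∫ t in Ioc (0:ℝ) x, 2 * G t := by
        apply integral_mono_ae (hD_int.mono_set (fun t ht => ht.1))
          (IntegrableOn.mono_set (hG_int.const_mul 2) (fun t ht => ht.1))
        filter_upwards [ae_restrict_mem measurableSet_Ioc] with t ht
        have ht0 : (0:ℝ) < t := ht.1
        have : 0 ≤ (β t + lam) * Uf t :=
          mul_nonneg (add_nonneg (hsa.β_nonneg t ht0) sol.lam_pos.le) (sol.U_pos t ht0).le
        linarith
    _ ≤ ∫ t in Ioi (0:ℝ), 2 * G t := by
        apply setIntegral_mono_set (hG_int.const_mul 2)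
        · filter_upwards [hG_nonneg] with t ht
          simp only [Pi.zero_apply] at ht ⊢
          linarith
        · exact HasSubset.Subset.eventuallyLE (fun t ht => ht.1)
    _ = 2 * Λ := by rw [integral_const_mul, hG_eq]

/-- Polymerization dependency, exploding growth: if `1/τ` is integrable near `0`, then
`liminf_{α→+∞} λ_α ≥ ess liminf_{x→+∞} β(x)` (in `[0,+∞]`). -/
theorem polymerization_dependency_exploding
    (τ β : ℝ → ℝ) (κ : ℝ → ℝ → ℝ)
    (hsa : StandingAssumptions τ β κ)
    (hτint : ∃ a : ℝ, 0 < a ∧ IntegrableOn (fun x => 1 / τ x) (Ioc 0 a) volume)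
    (lam : ℝ → ℝ) (U : ℝ → ℝ → ℝ)
    (hsol : ∀ α : ℝ, 0 < α → EigenSolution (fun x => α * τ x) β κ (lam α) (U α)) :
    Filter.liminf (fun x => ENNReal.ofReal (β x)) (ae (volume : Measure ℝ) ⊓ atTop) ≤
      Filter.liminf (fun α => ENNReal.ofReal (lam α)) atTop := by
  by_contra hcon
  rw [not_le] at hcon
  obtain ⟨b, hRb, hbL⟩ := exists_between hcon
  obtain ⟨c, hRc, hcb⟩ := exists_between hRb
  have hbne : b ≠ ⊤ := (hbL.trans_le le_top).ne
  have hcne : c ≠ ⊤ := (hcb.trans_le le_top).ne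
  have hev : ∀ᶠ x in ae (volume : Measure ℝ) ⊓ atTop, b < ENNReal.ofReal (β x) :=
    eventually_lt_of_lt_liminf hbL
  rw [eventually_inf] at hev
  obtain ⟨s, hs, t, ht, hst⟩ := hev
  obtain ⟨m, hm⟩ := mem_atTop_sets.mp ht
  set br : ℝ := b.toReal with hbrdef
  set cr : ℝ := c.toReal with hcrdef
  have hcr_nonneg : 0 ≤ cr := ENNReal.toReal_nonneg
  have hcrbr : cr < br := (ENNReal.toReal_lt_toReal hcne hbne).mpr hcb
  have hbr_nonneg : 0 ≤ br := ENNReal.toReal_nonneg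
  set m' : ℝ := max m 1 with hm'def
  have hm'pos : (0:ℝ) < m' := lt_of_lt_of_le one_pos (le_max_right m 1)
  have hs' : ∀ᵐ x ∂(volume : Measure ℝ), x ∈ s := hs
  have hβ_ae : ∀ᵐ x ∂(volume : Measure ℝ), m' ≤ x → br ≤ β x := by
    filter_upwards [hs'] with x hxs hxm
    have hx := hst x ⟨hxs, hm x (le_trans (le_max_left m 1) hxm)⟩
    exact ((ENNReal.lt_ofReal_iff_toReal_lt hbne).mp hx).le
  -- integrability of 1/τ on (0, m']
  obtain ⟨a, ha_pos, ha_int⟩ := hτint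
  have hinv_meas : Measurable fun x => 1 / τ x := measurable_const.div hsa.τ_meas
  have hinvint : IntegrableOn (fun x => 1 / τ x) (Ioc 0 m') volume := by
    rcases le_or_gt m' a with h | h
    · exact ha_int.mono_set (Ioc_subset_Ioc_right h)
    · obtain ⟨mc, hmc_pos, hmc⟩ := hsa.pos_on_compacts (Icc a m') isCompact_Icc
        (fun x hx => lt_of_lt_of_le ha_pos hx.1)
      have hbd : IntegrableOn (fun x => 1 / τ x) (Icc a m') volume := by
        apply Integrable.mono' (integrable_const (1/mc)) hinv_meas.aestronglyMeasurable
        filter_upwards [hmc] with x hx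
        have hτx : 0 < τ x := lt_of_lt_of_le hmc_pos hx.1
        rw [Real.norm_of_nonneg (by positivity)]
        exact one_div_le_one_div_of_le hmc_pos hx.1
      apply (ha_int.union hbd).mono_set
      intro x hx
      rcases le_or_gt x a with h2 | h2
      · exact Or.inl ⟨hx.1, h2⟩
      · exact Or.inr ⟨h2.le, hx.2⟩
  set I : ℝ := ∫ x in Ioc (0:ℝ) m', 1 / τ x with hIdef
  have hI_nonneg : 0 ≤ I := by
    apply setIntegral_nonneg measurableSet_Ioc
    intro x hx
    have := hsa.τ_nonneg x hx.1
    positivity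
  -- a.e. positivity of τ on (0, m']
  have hτpos_ae : ∀ᵐ x ∂(volume.restrict (Ioc (0:ℝ) m')), 0 < τ x := by
    have hcover : Ioc (0:ℝ) m' = ⋃ n : ℕ, Icc (m'/((n:ℝ)+1)) m' := by
      ext x
      simp only [mem_Ioc, mem_iUnion, mem_Icc]
      constructor
      · rintro ⟨hx0, hxm⟩
        obtain ⟨n, hn⟩ := exists_nat_ge (m'/x)
        refine ⟨n, ?_, hxm⟩
        rw [div_le_iff₀ (by positivity)]
        rw [div_le_iff₀ hx0] at hn
        nlinarith
      · rintro ⟨n, h1, h2⟩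
        exact ⟨lt_of_lt_of_le (by positivity) h1, h2⟩
    rw [hcover, ae_restrict_iUnion_iff]
    intro n
    obtain ⟨mc, hmc_pos, hmc⟩ := hsa.pos_on_compacts (Icc (m'/((n:ℝ)+1)) m') isCompact_Icc
      (fun x hx => lt_of_lt_of_le (by positivity) hx.1)
    filter_upwards [hmc] with x hx
    exact lt_of_lt_of_le hmc_pos hx.1
  -- eventual lower bound for lam
  have hev2 : ∀ᶠ (α : ℝ) in atTop, c ≤ ENNReal.ofReal (lam α) := by
    filter_upwards [eventually_gt_atTop (max 1 (2*br*I*cr/(br - cr)))] with α hαA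
    have hα : (0:ℝ) < α := lt_of_lt_of_le one_pos (le_trans (le_max_left _ _) hαA.le)
    have hαI : 2*br*I*cr/(br - cr) < α := lt_of_le_of_lt (le_max_right _ _) hαA
    have hkey : 2*br*I*cr < α * (br - cr) := by
      rw [div_lt_iff₀ (by linarith)] at hαI
      linarith [hαI]
    obtain ⟨hlam_eq, hbound⟩ := eigen_key hsa hα (hsol α hα)
    have hUint : IntegrableOn (U α) (Ioi (0:ℝ)) volume := by
      simpa using (hsol α hα).int_U 0 le_rfl
    have hβUint : IntegrableOn (fun x => β x * U α x) (Ioi (0:ℝ)) volume := by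
      simpa using (hsol α hα).int_betaU 0 le_rfl
    -- (d) small-x mass bound
    have hUm : (∫ x in Ioc (0:ℝ) m', U α x) ≤ 2 * lam α / α * I := by
      have hptwise : ∀ᵐ x ∂(volume.restrict (Ioc (0:ℝ) m')),
          U α x ≤ 2 * lam α / α * (1 / τ x) := by
        filter_upwards [hτpos_ae, ae_restrict_mem measurableSet_Ioc] with x hτx hx
        have h2 := hbound x hx.1
        have hατ : 0 < α * τ x := by positivity
        have : U α x = (α * τ x * U α x) / (α * τ x) := by field_simp
        rw [this]
        calc (α * τ x * U α x) / (α * τ x) ≤ (2 * lam α) / (α * τ x) :=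
              (div_le_div_iff_of_pos_right hατ).mpr h2
          _ = 2 * lam α / α * (1 / τ x) := by field_simp
      calc (∫ x in Ioc (0:ℝ) m', U α x)
          ≤ ∫ x in Ioc (0:ℝ) m', 2 * lam α / α * (1 / τ x) :=
            integral_mono_ae (hUint.mono_set (fun x hx => hx.1))
              (hinvint.const_mul _) hptwise
        _ = 2 * lam α / α * I := by rw [integral_const_mul, hIdef]
    -- (c) splitting
    have hsplit : (∫ x in Ioc (0:ℝ) m', U α x) + (∫ x in Ioi m', U α x) = 1 := by
      rw [← setIntegral_union (Ioc_disjoint_Ioi le_rfl) measurableSet_Ioi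
        (hUint.mono_set (fun x hx => hx.1))
        (hUint.mono_set (Ioi_subset_Ioi hm'pos.le)),
        Ioc_union_Ioi_eq_Ioi hm'pos.le]
      exact (hsol α hα).normalized
    -- (a)(b) lower bound for lam
    have hlam_ge : br * (∫ x in Ioi m', U α x) ≤ lam α := by
      rw [hlam_eq]
      calc br * ∫ x in Ioi m', U α x = ∫ x in Ioi m', br * U α x :=
            (integral_const_mul br _).symm
        _ ≤ ∫ x in Ioi m', β x * U α x := by
            apply integral_mono_ae ((hUint.mono_set (Ioi_subset_Ioi hm'pos.le)).const_mul br)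
              (hβUint.mono_set (Ioi_subset_Ioi hm'pos.le))
            filter_upwards [ae_restrict_of_ae hβ_ae, ae_restrict_mem measurableSet_Ioi]
              with x h1 h2
            have hx0 : (0:ℝ) < x := lt_trans hm'pos h2
            exact mul_le_mul_of_nonneg_right (h1 (le_of_lt h2))
              ((hsol α hα).U_pos x hx0).le
        _ ≤ ∫ x in Ioi (0:ℝ), β x * U α x := by
            apply setIntegral_mono_set hβUint
            · filter_upwards [ae_restrict_mem measurableSet_Ioi] with x hx
              exact mul_nonneg (hsa.β_nonneg x hx) ((hsol α hα).U_pos x hx).le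
            · exact HasSubset.Subset.eventuallyLE (Ioi_subset_Ioi hm'pos.le)
    have hlam_pos : 0 < lam α := (hsol α hα).lam_pos
    -- arithmetic: cr < lam α
    have hclam : cr ≤ lam α := by
      by_contra hle
      push_neg at hle
      have hfinal : br * (1 - 2 * lam α / α * I) ≤ lam α := by
        have h1 : 1 - 2 * lam α / α * I ≤ ∫ x in Ioi m', U α x := by linarith
        calc br * (1 - 2 * lam α / α * I) ≤ br * ∫ x in Ioi m', U α x :=
              mul_le_mul_of_nonneg_left h1 hbr_nonneg
          _ ≤ lam α := hlam_ge
      have h3 : br * α - 2 * br * lam α * I ≤ lam α * α := by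
        have := mul_le_mul_of_nonneg_right hfinal hα.le
        calc br * α - 2 * br * lam α * I = br * (1 - 2 * lam α / α * I) * α := by
              field_simp
          _ ≤ lam α * α := this
      have h4 : lam α * α ≤ cr * α := mul_le_mul_of_nonneg_right hle.le hα.le
      have h5 : 2 * br * lam α * I ≤ 2 * br * cr * I := by
        apply mul_le_mul_of_nonneg_right _ hI_nonneg
        nlinarith
      nlinarith
    calc c = ENNReal.ofReal cr := (ENNReal.ofReal_toReal hcne).symm
      _ ≤ ENNReal.ofReal (lam α) := ENNReal.ofReal_le_ofReal hclam
  have hcR : c ≤ liminf (fun α => ENNReal.ofReal (lam α)) atTop :=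
    le_liminf_of_le (by isBoundedDefault) hev2
  exact absurd hcR (not_le.mpr hRc)
end
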